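/- arXiv:2002.01310 — 4 statements merged into one kernel-verified Lean document; each statement's English description precedes it below -/
import Mathlib

section
/- Let (A_m)_{m∈ℤ} admit a partial exponential dichotomy and let B be an admissible Banach sequence space. Then the formula (𝔸 y)_n = ∑_{m ≤ n} 𝒜(n,m)P_m^1 y_m − ∑_{m > n} 𝒜(n,m)P_m^2 y_m defines a bounded linear operator 𝔸 : X_B^{s,u} → X_B^{s,u}, and for x, y ∈ X_B^{s,u} one has 𝔸y = x if and only if x_n − A_{n−1}x_{n−1} = y_n for all n ∈ ℤ. -/
/-- A Banach sequence space over ℤ: a linear subspace of all real sequences indexed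
by ℤ, equipped with a complete norm which is solid. -/
structure BanachSeqSpace where
  /-- membership in the subspace -/
  mem : (ℤ → ℝ) → Prop
  /-- the norm -/
  N : (ℤ → ℝ) → ℝ
  zero_mem : mem 0
  add_mem : ∀ s t, mem s → mem t → mem (s + t)
  smul_mem : ∀ (a : ℝ) (s), mem s → mem (a • s)
  N_nonneg : ∀ s, 0 ≤ N s
  N_zero : N 0 = 0
  N_eq_zero : ∀ s, mem s → N s = 0 → s = 0
  N_add : ∀ s t, mem s → mem t → N (s + t) ≤ N s + N t
  N_smul : ∀ (a : ℝ) (s), mem s → N (a • s) = |a| * N s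
  /-- solidity: if |s n| ≤ |t n| for all n and t belongs to the space,
  then so does s, with N s ≤ N t -/
  solid : ∀ s t, mem t → (∀ n : ℤ, |s n| ≤ |t n|) → mem s ∧ N s ≤ N t
  /-- completeness: every Cauchy sequence in the space converges in the space -/
  complete : ∀ u : ℕ → (ℤ → ℝ), (∀ k, mem (u k)) →
    (∀ ε > (0 : ℝ), ∃ K : ℕ, ∀ j ≥ K, ∀ k ≥ K, N (u j - u k) ≤ ε) →
    ∃ v, mem v ∧ ∀ ε > (0 : ℝ), ∃ K : ℕ, ∀ k ≥ K, N (u k - v) ≤ ε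

/-- An admissible Banach sequence space: additionally contains all singleton indicator
sequences with positive norm and is invariant under shifts, which act isometrically. -/
structure AdmissibleBSS extends BanachSeqSpace where
  indicator_mem : ∀ n : ℤ, mem (fun k => if k = n then (1 : ℝ) else 0)
  indicator_pos : ∀ n : ℤ, 0 < N (fun k => if k = n then (1 : ℝ) else 0)
  shift_mem : ∀ (s : ℤ → ℝ) (m : ℤ), mem s → mem (fun n => s (n + m))
  shift_isometry : ∀ (s : ℤ → ℝ) (m : ℤ), mem s → N (fun n => s (n + m)) = N s

variable {X : Type*} [NormedAddCommGroup X] [NormedSpace ℝ X]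

/-- The forward cocycle: `fcoc A n k = A (n+k-1) ∘ ⋯ ∘ A n`, so that
`fcoc A n k = 𝒜(n+k, n)`. -/
def fcoc (A : ℤ → X →L[ℝ] X) (n : ℤ) : ℕ → (X →L[ℝ] X)
  | 0 => ContinuousLinearMap.id ℝ X
  | (k + 1) => (A (n + k)).comp (fcoc A n k)

/-- A partial exponential dichotomy for a sequence `(A_m)_{m ∈ ℤ}` of bounded linear
operators: projections `P¹, P², P³` summing to the identity and commuting with the
dynamics, with the dynamics invertible along the unstable direction (witnessed by the
backward cocycle `V m n = 𝒜(m,n)P_n²` for `m ≤ n`), and exponential bounds. -/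
structure PartialDichotomy (A : ℤ → X →L[ℝ] X) where
  P1 : ℤ → X →L[ℝ] X
  P2 : ℤ → X →L[ℝ] X
  P3 : ℤ → X →L[ℝ] X
  D : ℝ
  b : ℝ
  d : ℝ
  hD : 0 < D
  hb : 0 < b
  hd : 0 < d
  proj1 : ∀ n, (P1 n).comp (P1 n) = P1 n
  proj2 : ∀ n, (P2 n).comp (P2 n) = P2 n
  proj3 : ∀ n, (P3 n).comp (P3 n) = P3 n
  sum_eq : ∀ n (x : X), P1 n x + P2 n x + P3 n x = x
  comm1 : ∀ n, (A n).comp (P1 n) = (P1 (n + 1)).comp (A n)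
  comm2 : ∀ n, (A n).comp (P2 n) = (P2 (n + 1)).comp (A n)
  comm3 : ∀ n, (A n).comp (P3 n) = (P3 (n + 1)).comp (A n)
  /-- the backward cocycle along the unstable direction, `V m n = 𝒜(m,n)P_n²` for `m ≤ n` -/
  V : ℤ → ℤ → X →L[ℝ] X
  V_self : ∀ n, V n n = P2 n
  V_proj : ∀ m n, m ≤ n → (V m n).comp (P2 n) = V m n
  V_range : ∀ m n, m ≤ n → (P2 m).comp (V m n) = V m n
  /-- `𝒜(n,m) ∘ 𝒜(m,n)P_n² = P_n²`: `V m n` inverts the forward dynamics -/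
  V_right_inv : ∀ m n, m ≤ n → (fcoc A m (n - m).toNat).comp (V m n) = P2 n
  /-- `𝒜(m,n) ∘ 𝒜(n,m)P_m² = P_m²` -/
  V_left_inv : ∀ m n, m ≤ n → (V m n).comp ((fcoc A m (n - m).toNat).comp (P2 m)) = P2 m
  /-- `‖𝒜(m,n)P_n¹‖ ≤ D e^{-d(m-n)}` for `m ≥ n` -/
  bound1 : ∀ (n : ℤ) (k : ℕ), ‖(fcoc A n k).comp (P1 n)‖ ≤ D * Real.exp (-d * k)
  /-- `‖𝒜(m,n)P_n²‖ ≤ D e^{-b(n-m)}` for `m ≤ n` -/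
  bound2 : ∀ m n, m ≤ n → ‖V m n‖ ≤ D * Real.exp (-b * (n - m))

/-- Membership in `X_B`: the sequence of norms belongs to `B`. -/
def memXB (B : BanachSeqSpace) (x : ℤ → X) : Prop := B.mem (fun n => ‖x n‖)

/-- The norm on `X_B`. -/
def NXB (B : BanachSeqSpace) (x : ℤ → X) : ℝ := B.N (fun n => ‖x n‖)

/-- Membership in the stable-unstable subspace `X_B^{s,u}`:
`x ∈ X_B` and `x_n ∈ Im P_n¹ ⊕ Im P_n²` for all `n`. -/
def memXBsu (B : BanachSeqSpace) {A : ℤ → X →L[ℝ] X} (pd : PartialDichotomy A)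
    (x : ℤ → X) : Prop :=
  memXB B x ∧ ∀ n : ℤ, x n = pd.P1 n (x n) + pd.P2 n (x n)

/-! The series defining `𝔸 y` converge because the dichotomy bounds give them geometric weights
and every element of an admissible space is bounded (solidity plus shift invariance of the unit
sequences make evaluation at `n` continuous). Hence `‖(𝔸 y)_n‖` is dominated by a convolution of
`(‖y_n‖)` with a summable kernel, which lies in `B` with norm at most `‖kernel‖₁ ‖y‖_B` because
`B` is complete and shifts are isometries; solidity then bounds `𝔸 y`. Shifting the summation index
shows that `𝔸 y` solves the difference equation. Conversely, the difference of two solutions in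
`X_B^{s,u}` is a bounded orbit of the homogeneous equation: its `P¹`-part decays forward and its
`P²`-part backward in time, so both vanish. -/

open Filter Topology Real

namespace BanachSeqSpace

variable (B : BanachSeqSpace)

lemma mem_sub {s t : ℤ → ℝ} (hs : B.mem s) (ht : B.mem t) : B.mem (s - t) := by
  simpa [sub_eq_add_neg] using B.add_mem s _ hs (B.smul_mem (-1) t ht)

lemma N_sub_comm {s t : ℤ → ℝ} (hs : B.mem s) (ht : B.mem t) : B.N (s - t) = B.N (t - s) := by
  simpa using B.N_smul (-1) _ (B.mem_sub ht hs)

lemma mem_sum {ι : Type*} (g : ι → ℤ → ℝ) (L : Finset ι) (hg : ∀ i ∈ L, B.mem (g i)) :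
    B.mem (∑ i ∈ L, g i) := by
  classical
  induction L using Finset.induction with
  | empty => simpa using B.zero_mem
  | insert a L ha ih =>
    rw [Finset.sum_insert ha]
    exact B.add_mem _ _ (hg a (Finset.mem_insert_self a L))
      (ih fun i hi => hg i (Finset.mem_insert_of_mem hi))

lemma N_sum_le {ι : Type*} (g : ι → ℤ → ℝ) (L : Finset ι) (hg : ∀ i ∈ L, B.mem (g i)) :
    B.N (∑ i ∈ L, g i) ≤ ∑ i ∈ L, B.N (g i) := by
  classical
  induction L using Finset.induction with
  | empty => simp [B.N_zero]
  | insert a L ha ih =>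
    have hL : ∀ i ∈ L, B.mem (g i) := fun i hi => hg i (Finset.mem_insert_of_mem hi)
    rw [Finset.sum_insert ha, Finset.sum_insert ha]
    exact (B.N_add _ _ (hg a (Finset.mem_insert_self a L)) (B.mem_sum g L hL)).trans
      (add_le_add le_rfl (ih hL))

end BanachSeqSpace

namespace AdmissibleBSS

variable (B : AdmissibleBSS)

lemma exists_abs_apply_le : ∃ c > 0, ∀ s, B.mem s → ∀ n, |s n| ≤ c * B.N s := by
  set e : ℤ → ℤ → ℝ := fun n k => if k = n then 1 else 0 with he_def
  refine ⟨(B.N (e 0))⁻¹, inv_pos.2 (B.indicator_pos 0), fun s hs n => ?_⟩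
  have he : B.N (e n) = B.N (e 0) := by
    rw [← B.shift_isometry (e n) n (B.indicator_mem n)]
    congr
    funext k
    simp [he_def]
  have hsolid : B.N (s n • e n) ≤ B.N s :=
    (B.solid _ s hs fun k => by by_cases h : k = n <;> simp [he_def, h]).2
  rw [B.N_smul _ _ (B.indicator_mem n), he] at hsolid
  rw [inv_mul_eq_div, le_div_iff₀ (B.indicator_pos 0)]
  exact hsolid

lemma exists_norm_le_of_memXB {E : Type*} [NormedAddCommGroup E] {y : ℤ → E}
    (hy : memXB B.toBanachSeqSpace y) :
    ∃ M, ∀ n, ‖y n‖ ≤ M := by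
  obtain ⟨c, -, hc⟩ := B.exists_abs_apply_le
  exact ⟨c * NXB B.toBanachSeqSpace y, fun n => by simpa [NXB] using hc _ hy n⟩

lemma mem_and_N_le_of_tendsto {u : ℕ → ℤ → ℝ} (hu : ∀ k, B.mem (u k))
    (hcauchy : ∀ ε > 0, ∃ K : ℕ, ∀ j ≥ K, ∀ k ≥ K, B.N (u j - u k) ≤ ε)
    {w : ℤ → ℝ} (hw : ∀ n, Tendsto (fun k => u k n) atTop (𝓝 (w n)))
    {C : ℝ} (hC : ∀ k, B.N (u k) ≤ C) : B.mem w ∧ B.N w ≤ C := by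
  obtain ⟨v, hv, hlim⟩ := B.complete u hu hcauchy
  obtain ⟨c, -, hc⟩ := B.exists_abs_apply_le
  have hN : Tendsto (fun k => B.N (u k - v)) atTop (𝓝 0) := by
    rw [Metric.tendsto_atTop]
    intro ε hε
    obtain ⟨K, hK⟩ := hlim (ε / 2) (half_pos hε)
    refine ⟨K, fun k hk => ?_⟩
    rw [Real.dist_eq, sub_zero, abs_of_nonneg (B.N_nonneg _)]
    linarith [hK k hk]
  have hvw : v = w := by
    funext n
    refine tendsto_nhds_unique ?_ (hw n)
    have hdiff : Tendsto (fun k => u k n - v n) atTop (𝓝 0) :=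
      squeeze_zero_norm (fun k => hc _ (B.mem_sub (hu k) hv) n) (by simpa using hN.const_mul c)
    simpa using hdiff.add_const (v n)
  subst hvw
  refine ⟨hv, ge_of_tendsto' (by simpa using hN.add_const C) fun k => ?_⟩
  calc B.N v = B.N ((v - u k) + u k) := by rw [sub_add_cancel]
    _ ≤ B.N (v - u k) + B.N (u k) := B.N_add _ _ (B.mem_sub hv (hu k)) (hu k)
    _ ≤ B.N (u k - v) + C := by rw [B.N_sub_comm hv (hu k)]; linarith [hC k]

lemma tsum_mul_shift_mem_and_N_le {r : ℕ → ℝ} (hr0 : ∀ k, 0 ≤ r k) (hr : Summable r) (f : ℕ → ℤ)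
    {s : ℤ → ℝ} (hs : B.mem s) :
    B.mem (fun n => ∑' k, r k * s (n + f k)) ∧
      B.N (fun n => ∑' k, r k * s (n + f k)) ≤ (∑' k, r k) * B.N s := by
  obtain ⟨c, -, hc⟩ := B.exists_abs_apply_le
  set g : ℕ → ℤ → ℝ := fun k n => r k * s (n + f k) with hg_def
  have hg : ∀ k, B.mem (g k) := fun k => B.smul_mem (r k) _ (B.shift_mem s (f k) hs)
  have hNg : ∀ k, B.N (g k) = r k * B.N s := fun k => by
    rw [show g k = r k • fun n => s (n + f k) from rfl, B.N_smul _ _ (B.shift_mem s (f k) hs),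
      abs_of_nonneg (hr0 k), B.shift_isometry s (f k) hs]
  have hmem : ∀ L : Finset ℕ, B.mem (∑ k ∈ L, g k) := fun L => B.mem_sum g L fun k _ => hg k
  have hN : ∀ L : Finset ℕ, B.N (∑ k ∈ L, g k) ≤ (∑ k ∈ L, r k) * B.N s := fun L =>
    (B.N_sum_le g L fun k _ => hg k).trans_eq (by simp only [hNg, Finset.sum_mul])
  set R : ℕ → ℝ := fun K => ∑ k ∈ Finset.range K, r k
  have hdist : ∀ j k, B.N (∑ i ∈ Finset.range j, g i - ∑ i ∈ Finset.range k, g i)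
      ≤ dist (R j) (R k) * B.N s := by
    intro j k
    wlog hjk : j ≤ k generalizing j k
    · rw [B.N_sub_comm (hmem _) (hmem _), dist_comm]
      exact this k j (le_of_not_ge hjk)
    rw [B.N_sub_comm (hmem _) (hmem _), ← Finset.sum_Ico_eq_sub _ hjk]
    refine (hN _).trans (mul_le_mul_of_nonneg_right ?_ (B.N_nonneg s))
    rw [Finset.sum_Ico_eq_sub _ hjk, Real.dist_eq, abs_sub_comm]
    exact le_abs_self _
  refine B.mem_and_N_le_of_tendsto (u := fun K => ∑ k ∈ Finset.range K, g k) (fun K => hmem _) ?_ ?_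
    (fun K => (hN _).trans (mul_le_mul_of_nonneg_right
      (hr.sum_le_tsum _ fun k _ => hr0 k) (B.N_nonneg s)))
  · intro ε hε
    obtain ⟨K, hK⟩ := Metric.cauchySeq_iff.1 hr.hasSum.tendsto_sum_nat.cauchySeq
      (ε / (B.N s + 1)) (div_pos hε (by linarith [B.N_nonneg s]))
    refine ⟨K, fun j hj k hk => (hdist j k).trans ?_⟩
    calc dist (R j) (R k) * B.N s ≤ ε / (B.N s + 1) * B.N s :=
          mul_le_mul_of_nonneg_right (hK j hj k hk).le (B.N_nonneg s)
      _ ≤ ε := by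
          rw [div_mul_eq_mul_div, div_le_iff₀ (by linarith [B.N_nonneg s])]
          nlinarith [B.N_nonneg s]
  · intro n
    simp only [Finset.sum_apply, hg_def]
    refine (Summable.of_norm_bounded (hr.mul_right (c * B.N s)) fun k => ?_).hasSum.tendsto_sum_nat
    rw [norm_mul, Real.norm_of_nonneg (hr0 k)]
    exact mul_le_mul_of_nonneg_left (hc s hs _) (hr0 k)

end AdmissibleBSS

section Cocycle

variable (A : ℤ → X →L[ℝ] X)

lemma fcoc_succ' (n : ℤ) (k : ℕ) : fcoc A n (k + 1) = (fcoc A (n + 1) k).comp (A n) := by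
  induction k with
  | zero => ext x; simp [fcoc]
  | succ k ih =>
    change (A (n + (k + 1 : ℕ))).comp (fcoc A n (k + 1))
      = (A (n + 1 + k)).comp ((fcoc A (n + 1) k).comp (A n))
    rw [ih, Nat.cast_succ, add_right_comm, add_assoc]

lemma fcoc_apply_of_comm {P : ℤ → X →L[ℝ] X} (hP : ∀ n, (A n).comp (P n) = (P (n + 1)).comp (A n))
    (n : ℤ) (k : ℕ) (x : X) : fcoc A n k (P n x) = P (n + k) (fcoc A n k x) := by
  induction k with
  | zero => simp [fcoc]
  | succ k ih =>
    change A (n + k) (fcoc A n k (P n x)) = P (n + (k + 1 : ℕ)) (A (n + k) (fcoc A n k x))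
    rw [ih, ← ContinuousLinearMap.comp_apply, hP, Nat.cast_succ, ← add_assoc]
    rfl

lemma fcoc_apply_of_orbit {w : ℤ → X} (hw : ∀ n, w (n + 1) = A n (w n)) (n : ℤ) (k : ℕ) :
    fcoc A n k (w n) = w (n + k) := by
  induction k with
  | zero => simp [fcoc]
  | succ k ih =>
    change A (n + k) (fcoc A n k (w n)) = _
    rw [ih, Nat.cast_succ, ← add_assoc, hw]

end Cocycle

lemma eq_zero_of_norm_le_exp {E : Type*} [NormedAddCommGroup E] {v : E} {C c : ℝ} (hc : 0 < c)
    (h : ∀ k : ℕ, ‖v‖ ≤ C * exp (-c * k)) : v = 0 := by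
  have hlim : Tendsto (fun k : ℕ => C * exp (-c * k)) atTop (𝓝 0) := by
    simpa [mul_comm] using
      (summable_exp_nat_mul_iff.2 (neg_lt_zero.2 hc)).tendsto_atTop_zero.const_mul C
  exact norm_le_zero_iff.1 (ge_of_tendsto' hlim h)

namespace PartialDichotomy

variable {A : ℤ → X →L[ℝ] X} (pd : PartialDichotomy A)

lemma sub_eq_P1_add_P2 (n : ℤ) {a b : X} (ha : pd.P1 n a = a) (hb : pd.P2 n b = b) :
    a - b = pd.P1 n (a - b) + pd.P2 n (a - b) := by
  have : IsAddTorsionFree (X →L[ℝ] X) := .of_isTorsionFree ℝ _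
  have h1 : IsIdempotentElem (pd.P1 n) := pd.proj1 n
  have h2 : IsIdempotentElem (pd.P2 n) := pd.proj2 n
  -- `P¹ + P² = 1 - P³` is idempotent, so `P¹` and `P²` anticommute, hence are orthogonal
  have h12 : IsIdempotentElem (pd.P1 n + pd.P2 n) := by
    rw [show pd.P1 n + pd.P2 n = 1 - pd.P3 n from
      ContinuousLinearMap.ext fun x => eq_sub_of_add_eq (pd.sum_eq n x)]
    exact IsIdempotentElem.one_sub (pd.proj3 n)
  have hanti := (h1.add_iff h2).1 h12
  have hP1P2 : pd.P1 n * pd.P2 n = 0 := h1.mul_eq_zero_of_anticommute hanti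
  have hP2P1 : pd.P2 n * pd.P1 n = 0 := by rwa [hP1P2, zero_add] at hanti
  have hb0 : pd.P1 n b = 0 := by rw [← hb]; exact congr($hP1P2 b)
  have ha0 : pd.P2 n a = 0 := by rw [← ha]; exact congr($hP2P1 a)
  rw [map_sub, map_sub, ha, hb, ha0, hb0]
  abel

lemma V_fcoc_P2_apply (n : ℤ) (k : ℕ) (x : X) :
    pd.V n (n + k) (fcoc A n k (pd.P2 n x)) = pd.P2 n x := by
  have h := congr($(pd.V_left_inv n (n + k) (by omega)) x)
  rwa [show (n + k - n).toNat = k by omega] at h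

lemma comp_V {n m : ℤ} (h : n < m) : (A n).comp (pd.V n m) = pd.V (n + 1) m := by
  obtain ⟨k, rfl⟩ : ∃ k : ℕ, m = n + 1 + k := ⟨(m - (n + 1)).toNat, by omega⟩
  ext x
  have hright : fcoc A (n + 1) k (A n (pd.V n (n + 1 + k) x)) = pd.P2 (n + 1 + k) x := by
    have := congr($(pd.V_right_inv n (n + 1 + k) h.le) x)
    rwa [show (n + 1 + k - n).toNat = k + 1 by omega, fcoc_succ'] at this
  have hrange : pd.P2 (n + 1) (A n (pd.V n (n + 1 + k) x)) = A n (pd.V n (n + 1 + k) x) := by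
    rw [← ContinuousLinearMap.comp_apply, ← pd.comm2, ContinuousLinearMap.comp_apply,
      ← ContinuousLinearMap.comp_apply (pd.P2 n), pd.V_range n _ h.le]
  calc A n (pd.V n (n + 1 + k) x)
      = pd.V (n + 1) (n + 1 + k) (fcoc A (n + 1) k (pd.P2 (n + 1) (A n (pd.V n (n + 1 + k) x)))) :=
        by rw [pd.V_fcoc_P2_apply, hrange]
    _ = pd.V (n + 1) (n + 1 + k) (pd.P2 (n + 1 + k) x) := by rw [hrange, hright]
    _ = pd.V (n + 1) (n + 1 + k) x := congr($(pd.V_proj _ _ (by omega)) x)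

lemma norm_fcoc_P1_apply_le (n : ℤ) (k : ℕ) (x : X) :
    ‖fcoc A n k (pd.P1 n x)‖ ≤ pd.D * exp (-pd.d * k) * ‖x‖ :=
  (((fcoc A n k).comp (pd.P1 n)).le_opNorm x).trans
    (mul_le_mul_of_nonneg_right (pd.bound1 n k) (norm_nonneg x))

lemma norm_V_apply_le {m n : ℤ} (h : m ≤ n) (x : X) :
    ‖pd.V m n x‖ ≤ pd.D * exp (-pd.b * (n - m)) * ‖x‖ :=
  ((pd.V m n).le_opNorm x).trans (mul_le_mul_of_nonneg_right (pd.bound2 m n h) (norm_nonneg x))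

lemma eq_zero_of_bounded_orbit {w : ℤ → X} {M : ℝ} (hM : ∀ n, ‖w n‖ ≤ M)
    (horbit : ∀ n, w (n + 1) = A n (w n)) (hsplit : ∀ n, w n = pd.P1 n (w n) + pd.P2 n (w n)) :
    w = 0 := by
  funext n
  have hP1 : pd.P1 n (w n) = 0 := by
    refine eq_zero_of_norm_le_exp (C := pd.D * M) pd.hd fun k => ?_
    have hback : pd.P1 n (w n) = fcoc A (n - k) k (pd.P1 (n - k) (w (n - k))) := by
      rw [fcoc_apply_of_comm A pd.comm1, fcoc_apply_of_orbit A horbit, sub_add_cancel]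
    have hdecay :=
      mul_le_mul_of_nonneg_left (hM (n - k)) (mul_nonneg pd.hD.le (exp_pos (-pd.d * k)).le)
    rw [hback]
    exact (pd.norm_fcoc_P1_apply_le _ _ _).trans (hdecay.trans_eq (by ring))
  have hP2 : pd.P2 n (w n) = 0 := by
    refine eq_zero_of_norm_le_exp (C := pd.D * M) pd.hb fun k => ?_
    have hforward : pd.P2 n (w n) = pd.V n (n + k) (w (n + k)) := by
      rw [← pd.V_fcoc_P2_apply n k, fcoc_apply_of_comm A pd.comm2, fcoc_apply_of_orbit A horbit,
        ← ContinuousLinearMap.comp_apply, pd.V_proj _ _ (by omega)]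
    rw [hforward]
    have hdecay :=
      mul_le_mul_of_nonneg_left (hM (n + k)) (mul_nonneg pd.hD.le (exp_pos (-pd.b * k)).le)
    refine (pd.norm_V_apply_le (by omega) _).trans ?_
    rw [show ((n + k : ℤ) : ℝ) - n = k by push_cast; ring]
    exact hdecay.trans_eq (by ring)
  rw [hsplit n, hP1, hP2, add_zero, Pi.zero_apply]

lemma eq_of_sub_A_pred_eq {x x' : ℤ → X} {M M' : ℝ} (hx : ∀ n, ‖x n‖ ≤ M)
    (hx' : ∀ n, ‖x' n‖ ≤ M') (hsplit : ∀ n, x n = pd.P1 n (x n) + pd.P2 n (x n))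
    (hsplit' : ∀ n, x' n = pd.P1 n (x' n) + pd.P2 n (x' n))
    (h : ∀ n, x n - A (n - 1) (x (n - 1)) = x' n - A (n - 1) (x' (n - 1))) : x = x' := by
  refine sub_eq_zero.1 (pd.eq_zero_of_bounded_orbit (M := M + M')
    (fun n => (norm_sub_le _ _).trans (add_le_add (hx n) (hx' n))) (fun n => ?_) (fun n => ?_))
  · have hn := h (n + 1)
    rw [add_sub_cancel_right, sub_eq_sub_iff_sub_eq_sub] at hn
    rw [Pi.sub_apply, Pi.sub_apply, map_sub, hn]
  · rw [Pi.sub_apply, map_sub, map_sub]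
    conv_lhs => rw [hsplit n, hsplit' n]
    abel

noncomputable def stableWeight (k : ℕ) : ℝ := pd.D * exp (-pd.d * k)

noncomputable def unstableWeight (k : ℕ) : ℝ := pd.D * exp (-pd.b * (1 + k))

lemma stableWeight_nonneg (k : ℕ) : 0 ≤ pd.stableWeight k :=
  mul_nonneg pd.hD.le (exp_pos _).le

lemma unstableWeight_nonneg (k : ℕ) : 0 ≤ pd.unstableWeight k :=
  mul_nonneg pd.hD.le (exp_pos _).le

lemma summable_stableWeight : Summable pd.stableWeight := by
  show Summable fun k : ℕ => pd.D * exp (-pd.d * k)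
  simpa [mul_comm] using
    (summable_exp_nat_mul_iff.2 (neg_lt_zero.2 pd.hd)).mul_left pd.D

lemma summable_unstableWeight : Summable pd.unstableWeight := by
  refine ((summable_exp_nat_mul_iff.2 (neg_lt_zero.2 pd.hb)).mul_left
    (pd.D * exp (-pd.b))).congr fun k => ?_
  rw [unstableWeight, mul_add, mul_one, exp_add, mul_comm (k : ℝ)]
  ring

noncomputable def greenOp (y : ℤ → X) (n : ℤ) : X :=
  (∑' k : ℕ, fcoc A (n - k) k (pd.P1 (n - k) (y (n - k))))
    - ∑' k : ℕ, pd.V n (n + 1 + k) (y (n + 1 + k))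

lemma greenOp_smul (a : ℝ) (y : ℤ → X) : pd.greenOp (a • y) = a • pd.greenOp y := by
  funext n
  simp only [greenOp, Pi.smul_apply, map_smul, tsum_const_smul'', smul_sub]

lemma norm_stable_term_le (y : ℤ → X) (n : ℤ) (k : ℕ) :
    ‖fcoc A (n - k) k (pd.P1 (n - k) (y (n - k)))‖ ≤ pd.stableWeight k * ‖y (n - k)‖ :=
  pd.norm_fcoc_P1_apply_le _ _ _

lemma norm_unstable_term_le (y : ℤ → X) (n : ℤ) (k : ℕ) :
    ‖pd.V n (n + 1 + k) (y (n + 1 + k))‖ ≤ pd.unstableWeight k * ‖y (n + 1 + k)‖ := by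
  refine (pd.norm_V_apply_le (by omega) _).trans_eq ?_
  rw [unstableWeight, show ((n + 1 + k : ℤ) : ℝ) - n = 1 + k by push_cast; ring]

variable {y : ℤ → X} {M : ℝ}

lemma summable_stableWeight_mul (hy : ∀ n, ‖y n‖ ≤ M) (n : ℤ) :
    Summable fun k : ℕ => pd.stableWeight k * ‖y (n - k)‖ :=
  (pd.summable_stableWeight.mul_right M).of_nonneg_of_le
    (fun k => mul_nonneg (pd.stableWeight_nonneg k) (norm_nonneg _))
    (fun k => mul_le_mul_of_nonneg_left (hy _) (pd.stableWeight_nonneg k))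

lemma summable_unstableWeight_mul (hy : ∀ n, ‖y n‖ ≤ M) (n : ℤ) :
    Summable fun k : ℕ => pd.unstableWeight k * ‖y (n + 1 + k)‖ :=
  (pd.summable_unstableWeight.mul_right M).of_nonneg_of_le
    (fun k => mul_nonneg (pd.unstableWeight_nonneg k) (norm_nonneg _))
    (fun k => mul_le_mul_of_nonneg_left (hy _) (pd.unstableWeight_nonneg k))

lemma norm_greenOp_apply_le (hy : ∀ n, ‖y n‖ ≤ M) (n : ℤ) :
    ‖pd.greenOp y n‖ ≤ (∑' k, pd.stableWeight k * ‖y (n - k)‖)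
      + ∑' k, pd.unstableWeight k * ‖y (n + 1 + k)‖ :=
  (norm_sub_le _ _).trans <| add_le_add
    (tsum_of_norm_bounded (pd.summable_stableWeight_mul hy n).hasSum (pd.norm_stable_term_le y n))
    (tsum_of_norm_bounded (pd.summable_unstableWeight_mul hy n).hasSum
      (pd.norm_unstable_term_le y n))

lemma memXB_greenOp_and_NXB_le (B : AdmissibleBSS) (hy : memXB B.toBanachSeqSpace y) :
    memXB B.toBanachSeqSpace (pd.greenOp y) ∧ NXB B.toBanachSeqSpace (pd.greenOp y)
      ≤ ((∑' k, pd.stableWeight k) + ∑' k, pd.unstableWeight k) * NXB B.toBanachSeqSpace y := by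
  obtain ⟨M, hM⟩ := B.exists_norm_le_of_memXB hy
  obtain ⟨h1, hN1⟩ := B.tsum_mul_shift_mem_and_N_le pd.stableWeight_nonneg
    pd.summable_stableWeight (fun k => -(k : ℤ)) hy
  obtain ⟨h2, hN2⟩ := B.tsum_mul_shift_mem_and_N_le pd.unstableWeight_nonneg
    pd.summable_unstableWeight (fun k => 1 + (k : ℤ)) hy
  simp only [← sub_eq_add_neg, ← add_assoc] at h1 hN1 h2 hN2
  obtain ⟨hmem, hle⟩ := B.solid (fun n => ‖pd.greenOp y n‖) _ (B.add_mem _ _ h1 h2) fun n => by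
    rw [abs_of_nonneg (norm_nonneg _), Pi.add_apply, abs_of_nonneg (add_nonneg
      (tsum_nonneg fun k => mul_nonneg (pd.stableWeight_nonneg k) (norm_nonneg _))
      (tsum_nonneg fun k => mul_nonneg (pd.unstableWeight_nonneg k) (norm_nonneg _)))]
    exact pd.norm_greenOp_apply_le hM n
  refine ⟨hmem, hle.trans ((B.N_add _ _ h1 h2).trans ?_)⟩
  rw [add_mul]
  exact add_le_add hN1 hN2

variable [CompleteSpace X]

lemma summable_stable (hy : ∀ n, ‖y n‖ ≤ M) (n : ℤ) :
    Summable fun k : ℕ => fcoc A (n - k) k (pd.P1 (n - k) (y (n - k))) :=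
  .of_norm_bounded (pd.summable_stableWeight_mul hy n) (pd.norm_stable_term_le y n)

lemma summable_unstable (hy : ∀ n, ‖y n‖ ≤ M) (n : ℤ) :
    Summable fun k : ℕ => pd.V n (n + 1 + k) (y (n + 1 + k)) :=
  .of_norm_bounded (pd.summable_unstableWeight_mul hy n) (pd.norm_unstable_term_le y n)

lemma greenOp_add (hy : ∀ n, ‖y n‖ ≤ M) {z : ℤ → X} {M' : ℝ} (hz : ∀ n, ‖z n‖ ≤ M') :
    pd.greenOp (y + z) = pd.greenOp y + pd.greenOp z := by
  funext n
  simp only [greenOp, Pi.add_apply, map_add]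
  rw [(pd.summable_stable hy n).tsum_add (pd.summable_stable hz n),
    (pd.summable_unstable hy n).tsum_add (pd.summable_unstable hz n)]
  abel

lemma greenOp_apply_eq_P1_add_P2 (hy : ∀ n, ‖y n‖ ≤ M) (n : ℤ) :
    pd.greenOp y n = pd.P1 n (pd.greenOp y n) + pd.P2 n (pd.greenOp y n) := by
  refine pd.sub_eq_P1_add_P2 n ?_ ?_
  · rw [(pd.P1 n).map_tsum (pd.summable_stable hy n)]
    refine tsum_congr fun k => ?_
    rw [fcoc_apply_of_comm A pd.comm1, sub_add_cancel, ← ContinuousLinearMap.comp_apply, pd.proj1]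
  · rw [(pd.P2 n).map_tsum (pd.summable_unstable hy n)]
    exact tsum_congr fun k => congr($(pd.V_range n _ (by omega)) _)

lemma greenOp_sub_A_pred (hy : ∀ n, ‖y n‖ ≤ M)
    (hsplit : ∀ n, y n = pd.P1 n (y n) + pd.P2 n (y n)) (n : ℤ) :
    pd.greenOp y n - A (n - 1) (pd.greenOp y (n - 1)) = y n := by
  obtain ⟨n, rfl⟩ : ∃ m, n = m + 1 := ⟨n - 1, by ring⟩
  rw [add_sub_cancel_right]
  have hstable : ∑' k : ℕ, fcoc A (n + 1 - k) k (pd.P1 (n + 1 - k) (y (n + 1 - k)))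
      = pd.P1 (n + 1) (y (n + 1))
        + A n (∑' k : ℕ, fcoc A (n - k) k (pd.P1 (n - k) (y (n - k)))) := by
    rw [(pd.summable_stable hy (n + 1)).tsum_eq_zero_add, (A n).map_tsum (pd.summable_stable hy n)]
    congr 1
    · simp [fcoc]
    · refine tsum_congr fun k => ?_
      rw [Nat.cast_succ, add_sub_add_right_eq_sub]
      change A (n - k + k) (fcoc A (n - k) k _) = _
      rw [sub_add_cancel]
  have hunstable : A n (∑' k : ℕ, pd.V n (n + 1 + k) (y (n + 1 + k)))
      = pd.P2 (n + 1) (y (n + 1)) + ∑' k : ℕ, pd.V (n + 1) (n + 1 + 1 + k) (y (n + 1 + 1 + k)) := by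
    have hshift : ∀ m, n < m → A n (pd.V n m (y m)) = pd.V (n + 1) m (y m) := fun m hm =>
      congr($(pd.comp_V hm) _)
    rw [(A n).map_tsum (pd.summable_unstable hy n),
      ((pd.summable_unstable hy n).mapL (A n)).tsum_eq_zero_add]
    congr 1
    · rw [hshift _ (by omega), Nat.cast_zero, add_zero, pd.V_self]
    · refine tsum_congr fun k => ?_
      rw [hshift _ (by omega), show n + 1 + ((k + 1 : ℕ) : ℤ) = n + 1 + 1 + k by push_cast; ring]
  rw [greenOp, greenOp, map_sub, hstable, hunstable]
  conv_rhs => rw [hsplit (n + 1)]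
  abel

end PartialDichotomy

theorem green_operator_exists (X : Type*) [NormedAddCommGroup X] [NormedSpace ℝ X]
    [CompleteSpace X] (B : AdmissibleBSS) (A : ℤ → X →L[ℝ] X)
    (pd : PartialDichotomy A) :
    ∃ (𝔸 : (ℤ → X) → (ℤ → X)) (C : ℝ),
      -- 𝔸 maps X_B^{s,u} into itself
      (∀ y, memXBsu B.toBanachSeqSpace pd y → memXBsu B.toBanachSeqSpace pd (𝔸 y)) ∧
      -- 𝔸 is linear on X_B^{s,u}
      (∀ y z, memXBsu B.toBanachSeqSpace pd y → memXBsu B.toBanachSeqSpace pd z →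
        𝔸 (y + z) = 𝔸 y + 𝔸 z) ∧
      (∀ (a : ℝ) (y), memXBsu B.toBanachSeqSpace pd y → 𝔸 (a • y) = a • 𝔸 y) ∧
      -- 𝔸 is bounded
      (∀ y, memXBsu B.toBanachSeqSpace pd y →
        NXB B.toBanachSeqSpace (𝔸 y) ≤ C * NXB B.toBanachSeqSpace y) ∧
      -- the explicit formula for 𝔸
      (∀ y, memXBsu B.toBanachSeqSpace pd y → ∀ n : ℤ,
        𝔸 y n = (∑' k : ℕ, fcoc A (n - k) k (pd.P1 (n - k) (y (n - k))))
          - ∑' k : ℕ, pd.V n (n + 1 + k) (y (n + 1 + k))) ∧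
      -- characterization: 𝔸 y = x iff x_n − A_{n−1} x_{n−1} = y_n for all n
      (∀ x y, memXBsu B.toBanachSeqSpace pd x → memXBsu B.toBanachSeqSpace pd y →
        (𝔸 y = x ↔ ∀ n : ℤ, x n - A (n - 1) (x (n - 1)) = y n)) := by
  refine ⟨pd.greenOp, (∑' k, pd.stableWeight k) + ∑' k, pd.unstableWeight k,
    fun y hy => ?_, fun y z hy hz => ?_, fun a y _ => pd.greenOp_smul a y,
    fun y hy => (pd.memXB_greenOp_and_NXB_le B hy.1).2, fun y _ n => rfl, fun x y hx hy => ?_⟩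
  · obtain ⟨M, hM⟩ := B.exists_norm_le_of_memXB hy.1
    exact ⟨(pd.memXB_greenOp_and_NXB_le B hy.1).1, pd.greenOp_apply_eq_P1_add_P2 hM⟩
  · obtain ⟨M, hM⟩ := B.exists_norm_le_of_memXB hy.1
    obtain ⟨M', hM'⟩ := B.exists_norm_le_of_memXB hz.1
    exact pd.greenOp_add hM hM'
  · obtain ⟨M, hM⟩ := B.exists_norm_le_of_memXB hy.1
    have hsolves := pd.greenOp_sub_A_pred hM hy.2
    refine ⟨fun hxy n => hxy ▸ hsolves n, fun hrec => ?_⟩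
    obtain ⟨Mx, hMx⟩ := B.exists_norm_le_of_memXB hx.1
    obtain ⟨MG, hMG⟩ := B.exists_norm_le_of_memXB (pd.memXB_greenOp_and_NXB_le B hy.1).1
    exact pd.eq_of_sub_A_pred_eq hMG hMx (pd.greenOp_apply_eq_P1_add_P2 hM) hx.2
      fun n => (hsolves n).trans (hrec n).symm
end

section
/- Let (A_m)_{m∈ℤ} admit a partial exponential dichotomy with constant D, let B be an admissible Banach sequence space, and let (f_n) be maps with Lipschitz constants c satisfying 4cD(1+2D)‖G‖ < 1, where G(x) = −x^c + 𝔸^{s,u} x^{s,u} is the associated bounded operator on X_B with operator norm induced by the adapted norm ‖·‖_B'. Then the system x_{n+1} = F_n(x_n), F_n = A_n + f_n, has the B-Lipschitz quasi-shadowing property: there is L > 0 such that for every ε > 0, taking δ = Lε, every (δ,B)-pseudotrajectory (y_n) admits a sequence z = (z_n) ∈ X_B with ‖z‖_B' ≤ ε satisfying x_{n+1} = F_n(x_n) + z_{n+1}^c for all n ∈ ℤ, where x_n = y_n + z_n^{s,u}. -/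
variable {X : Type*} [NormedAddCommGroup X] [NormedSpace ℝ X]

/-- The central component `x^c` of a sequence: `(x^c)_n = P_n³ x_n`. -/
def centr {A : ℤ → X →L[ℝ] X} (pd : PartialDichotomy A) (x : ℤ → X) : ℤ → X :=
  fun n => pd.P3 n (x n)

/-- The stable-unstable component `x^{s,u}` of a sequence: `(x^{s,u})_n = x_n − P_n³ x_n`. -/
def stun {A : ℤ → X →L[ℝ] X} (pd : PartialDichotomy A) (x : ℤ → X) : ℤ → X :=
  fun n => x n - pd.P3 n (x n)

/-- The adapted norm `‖x‖'_B = max{‖x^c‖_B, ‖x^{s,u}‖_B}` on `X_B`. -/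
def Nadapt (B : BanachSeqSpace) {A : ℤ → X →L[ℝ] X} (pd : PartialDichotomy A)
    (x : ℤ → X) : ℝ :=
  max (NXB B (centr pd x)) (NXB B (stun pd x))

/- STATEMENT 10: quasi-shadowing theorem. If 4cD(1+2D)‖G‖ < 1, where
G x = −x^c + 𝔸^{s,u} x^{s,u}, then the system x_{n+1} = F_n(x_n), F_n = A_n + f_n, has
the B-Lipschitz quasi-shadowing property: there is L > 0 such that for every ε > 0 and
every (Lε, B)-pseudotrajectory (y_n) there is z ∈ X_B with ‖z‖'_B ≤ ε such that
x_{n+1} = F_n(x_n) + z_{n+1}^c for all n, where x_n = y_n + z_n^{s,u}. -/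
set_option linter.unusedSectionVars false
set_option maxHeartbeats 1000000

section Helpers

variable {X : Type*} [NormedAddCommGroup X] [NormedSpace ℝ X]

/-- solidity specialized to X-valued sequences -/
lemma solidX (B : BanachSeqSpace) {x : ℤ → X} {t : ℤ → ℝ} (ht : B.mem t)
    (h : ∀ n, ‖x n‖ ≤ t n) : memXB B x ∧ NXB B x ≤ B.N t :=
  B.solid _ t ht fun n => by rw [abs_norm]; exact (h n).trans (le_abs_self _)

lemma mem_sub' (B : BanachSeqSpace) {s t : ℤ → ℝ} (hs : B.mem s) (ht : B.mem t) :
    B.mem (fun n => s n - t n) := by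
  have h := B.add_mem s ((-1 : ℝ) • t) hs (B.smul_mem (-1) t ht)
  have : (fun n => s n - t n) = s + (-1 : ℝ) • t := by
    funext n; simp [sub_eq_add_neg]
  rwa [this]

lemma memXB_sub (B : BanachSeqSpace) {x y : ℤ → X} (hx : memXB B x) (hy : memXB B y) :
    memXB B (fun n => x n - y n) ∧ NXB B (fun n => x n - y n) ≤ NXB B x + NXB B y := by
  have hmem : B.mem ((fun n => ‖x n‖) + fun n => ‖y n‖) := B.add_mem _ _ hx hy
  have h := solidX B hmem (x := fun n => x n - y n)
    (fun n => by simpa using norm_sub_le (x n) (y n))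
  exact ⟨h.1, h.2.trans (B.N_add _ _ hx hy)⟩

lemma memXB_add (B : BanachSeqSpace) {x y : ℤ → X} (hx : memXB B x) (hy : memXB B y) :
    memXB B (fun n => x n + y n) ∧ NXB B (fun n => x n + y n) ≤ NXB B x + NXB B y := by
  have hmem : B.mem ((fun n => ‖x n‖) + fun n => ‖y n‖) := B.add_mem _ _ hx hy
  have h := solidX B hmem (x := fun n => x n + y n)
    (fun n => by simpa using norm_add_le (x n) (y n))
  exact ⟨h.1, h.2.trans (B.N_add _ _ hx hy)⟩

lemma NXB_nonneg (B : BanachSeqSpace) (x : ℤ → X) : 0 ≤ NXB B x := B.N_nonneg _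

/-- scaled solidity -/
lemma solidX_smul (B : BanachSeqSpace) {x : ℤ → X} {t : ℤ → ℝ} {C : ℝ} (hC : 0 ≤ C)
    (ht : B.mem t) (h : ∀ n, ‖x n‖ ≤ C * t n) :
    memXB B x ∧ NXB B x ≤ C * B.N t := by
  have hmem : B.mem (C • t) := B.smul_mem C t ht
  have h2 := solidX B hmem (x := x) (fun n => by simpa using h n)
  rw [B.N_smul C t ht, abs_of_nonneg hC] at h2
  exact h2

/-- pointwise bound through the indicator -/
lemma abs_le_N (B : AdmissibleBSS) {s : ℤ → ℝ} (hs : B.mem s) (n : ℤ) :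
    |s n| * B.N (fun k => if k = n then (1 : ℝ) else 0) ≤ B.N s := by
  have h := B.solid (fun k => if k = n then s n else 0) s hs
    (fun k => by by_cases h : k = n <;> simp [h])
  have he : (fun k => if k = n then s n else 0)
      = s n • (fun k => if k = n then (1 : ℝ) else 0) := by
    funext k; by_cases h : k = n <;> simp [h]
  have := h.2
  rwa [he, B.N_smul _ _ (B.indicator_mem n)] at this

lemma norm_le_NXB (B : AdmissibleBSS) {x : ℤ → X} (hx : memXB B.toBanachSeqSpace x) (n : ℤ) :
    ‖x n‖ ≤ NXB B.toBanachSeqSpace x / B.N (fun k => if k = n then (1 : ℝ) else 0) := by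
  have h := abs_le_N B hx n
  rw [abs_norm] at h
  exact (le_div_iff₀ (B.indicator_pos n)).2 h

/-- shift by one -/
lemma shift_one (B : AdmissibleBSS) {s : ℤ → ℝ} (hs : B.mem s) :
    B.mem (fun n => s (n - 1)) ∧ B.N (fun n => s (n - 1)) = B.N s := by
  have h1 := B.shift_mem s (-1) hs
  have h2 := B.shift_isometry s (-1) hs
  have he : (fun n : ℤ => s (n - 1)) = (fun n : ℤ => s (n + (-1))) := by
    funext n; rw [sub_eq_add_neg]
  rw [he]; exact ⟨h1, h2⟩

end Helpers
set_option linter.unusedSectionVars false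

section ProjHelpers

variable {X : Type*} [NormedAddCommGroup X] [NormedSpace ℝ X]

/-- an abstract pairwise-orthogonality lemma for idempotents -/
lemma pair_ortho (p q : X →L[ℝ] X) (hp : ∀ x, p (p x) = p x) (hq : ∀ x, q (q x) = q x)
    (h : ∀ x, q (p x) + p (q x) = 0) : ∀ x, p (q x) = 0 ∧ q (p x) = 0 := by
  intro x
  have hB : q (p x) + q (p (q x)) = 0 := by
    have := congrArg (q ·) (h x)
    simpa [map_add, hq] using this
  have hC : q (p (q x)) + p (q x) = 0 := by
    have := h (q x); rwa [hq] at this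
  have heq : q (p x) - p (q x) = 0 := by
    have : q (p x) - p (q x)
        = (q (p x) + q (p (q x))) - (q (p (q x)) + p (q x)) := by abel
    rw [hB, hC, sub_zero] at this; exact this
  have hqp : q (p x) = p (q x) := sub_eq_zero.mp heq
  have h2 : (2 : ℝ) • p (q x) = 0 := by
    have := h x; rw [hqp] at this
    rw [two_smul]; exact this
  have h3 : p (q x) = 0 := by
    rcases smul_eq_zero.mp h2 with h | h
    · norm_num at h
    · exact h
  exact ⟨h3, by rw [hqp]; exact h3⟩

/-- for three idempotents summing to the identity, cross terms vanish -/
lemma triple_ortho (p q r : X →L[ℝ] X)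
    (hp : ∀ x, p (p x) = p x) (hq : ∀ x, q (q x) = q x) (hr : ∀ x, r (r x) = r x)
    (hs : ∀ x, p x + q x + r x = x) : ∀ x, q (r x) = 0 ∧ r (q x) = 0 := by
  have hanti : ∀ x, r (q x) + q (r x) = 0 := by
    intro x
    have e0 : q x + r x = x - p x := by
      have := hs x
      have : q x + r x = (p x + q x + r x) - p x := by abel
      rwa [hs x] at this
    have e1 : p (q x + r x) = 0 := by
      rw [e0, map_sub, hp, sub_self]
    have e2 := hs (q x + r x)
    rw [e1, zero_add] at e2
    rw [map_add, map_add, hq, hr] at e2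
    have : r (q x) + q (r x)
        = (q x + q (r x) + (r (q x) + r x)) - (q x + r x) := by abel
    rw [e2, sub_self] at this; exact this
  exact fun x => pair_ortho q r hq hr hanti x

variable {A : ℤ → X →L[ℝ] X} (pd : PartialDichotomy A)

lemma P1_idem (n : ℤ) (x : X) : pd.P1 n (pd.P1 n x) = pd.P1 n x := by
  simpa using ContinuousLinearMap.ext_iff.mp (pd.proj1 n) x

lemma P2_idem (n : ℤ) (x : X) : pd.P2 n (pd.P2 n x) = pd.P2 n x := by
  simpa using ContinuousLinearMap.ext_iff.mp (pd.proj2 n) x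

lemma P3_idem (n : ℤ) (x : X) : pd.P3 n (pd.P3 n x) = pd.P3 n x := by
  simpa using ContinuousLinearMap.ext_iff.mp (pd.proj3 n) x

lemma P2P3 (n : ℤ) (x : X) : pd.P2 n (pd.P3 n x) = 0 ∧ pd.P3 n (pd.P2 n x) = 0 :=
  triple_ortho (pd.P1 n) (pd.P2 n) (pd.P3 n) (P1_idem pd n) (P2_idem pd n) (P3_idem pd n)
    (pd.sum_eq n) x

lemma P1P3 (n : ℤ) (x : X) : pd.P1 n (pd.P3 n x) = 0 ∧ pd.P3 n (pd.P1 n x) = 0 :=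
  triple_ortho (pd.P2 n) (pd.P1 n) (pd.P3 n) (P2_idem pd n) (P1_idem pd n) (P3_idem pd n)
    (fun z => by
      calc pd.P2 n z + pd.P1 n z + pd.P3 n z
          = pd.P1 n z + pd.P2 n z + pd.P3 n z := by abel
        _ = z := pd.sum_eq n z) x

lemma norm_P1_le (n : ℤ) (x : X) : ‖pd.P1 n x‖ ≤ pd.D * ‖x‖ := by
  have h := pd.bound1 n 0
  have he : (fcoc A n 0).comp (pd.P1 n) = pd.P1 n := by
    show (ContinuousLinearMap.id ℝ X).comp (pd.P1 n) = pd.P1 n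
    simp
  rw [he] at h
  simp only [Nat.cast_zero, mul_zero, Real.exp_zero, mul_one] at h
  calc ‖pd.P1 n x‖ ≤ ‖pd.P1 n‖ * ‖x‖ := (pd.P1 n).le_opNorm x
    _ ≤ pd.D * ‖x‖ := by gcongr

lemma norm_P2_le (n : ℤ) (x : X) : ‖pd.P2 n x‖ ≤ pd.D * ‖x‖ := by
  have h := pd.bound2 n n le_rfl
  rw [pd.V_self n] at h
  simp only [sub_self, mul_zero, Real.exp_zero, mul_one] at h
  calc ‖pd.P2 n x‖ ≤ ‖pd.P2 n‖ * ‖x‖ := (pd.P2 n).le_opNorm x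
    _ ≤ pd.D * ‖x‖ := by gcongr
    
lemma norm_P12_le (n : ℤ) (x : X) :
    ‖pd.P1 n x + pd.P2 n x‖ ≤ 2 * pd.D * ‖x‖ := by
  calc ‖pd.P1 n x + pd.P2 n x‖ ≤ ‖pd.P1 n x‖ + ‖pd.P2 n x‖ := norm_add_le _ _
    _ ≤ pd.D * ‖x‖ + pd.D * ‖x‖ := add_le_add (norm_P1_le pd n x) (norm_P2_le pd n x)
    _ = 2 * pd.D * ‖x‖ := by ring

lemma P12_eq (n : ℤ) (x : X) : pd.P1 n x + pd.P2 n x = x - pd.P3 n x := by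
  have := pd.sum_eq n x
  have h : pd.P1 n x + pd.P2 n x = (pd.P1 n x + pd.P2 n x + pd.P3 n x) - pd.P3 n x := by
    abel
  rwa [this] at h

lemma norm_P3_le (n : ℤ) (x : X) : ‖pd.P3 n x‖ ≤ (1 + 2 * pd.D) * ‖x‖ := by
  have h : pd.P3 n x = x - (pd.P1 n x + pd.P2 n x) := by
    rw [P12_eq pd n x]; abel
  rw [h]
  calc ‖x - (pd.P1 n x + pd.P2 n x)‖ ≤ ‖x‖ + ‖pd.P1 n x + pd.P2 n x‖ := norm_sub_le _ _
    _ ≤ ‖x‖ + 2 * pd.D * ‖x‖ := by linarith [norm_P12_le pd n x]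
    _ = (1 + 2 * pd.D) * ‖x‖ := by ring

lemma norm_stun_le (n : ℤ) (x : X) : ‖x - pd.P3 n x‖ ≤ 2 * pd.D * ‖x‖ := by
  rw [← P12_eq pd n x]; exact norm_P12_le pd n x

end ProjHelpers
section CentrStun

variable {X : Type*} [NormedAddCommGroup X] [NormedSpace ℝ X]
variable {A : ℤ → X →L[ℝ] X} (pd : PartialDichotomy A)

lemma centr_apply (x : ℤ → X) (n : ℤ) : centr pd x n = pd.P3 n (x n) := rfl
lemma stun_apply (x : ℤ → X) (n : ℤ) : stun pd x n = x n - pd.P3 n (x n) := rfl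

lemma centr_add_stun (x : ℤ → X) (n : ℤ) : centr pd x n + stun pd x n = x n := by
  rw [centr_apply, stun_apply]; abel

lemma memXB_centr (B : BanachSeqSpace) {x : ℤ → X} (hx : memXB B x) :
    memXB B (centr pd x) ∧ NXB B (centr pd x) ≤ (1 + 2 * pd.D) * NXB B x :=
  solidX_smul B (by linarith [pd.hD]) hx (fun n => norm_P3_le pd n (x n))

lemma memXB_stun (B : BanachSeqSpace) {x : ℤ → X} (hx : memXB B x) :
    memXB B (stun pd x) ∧ NXB B (stun pd x) ≤ 2 * pd.D * NXB B x :=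
  solidX_smul B (by linarith [pd.hD]) hx (fun n => norm_stun_le pd n (x n))

lemma Nadapt_nonneg (B : BanachSeqSpace) (x : ℤ → X) : 0 ≤ Nadapt B pd x :=
  le_max_of_le_left (B.N_nonneg _)

lemma Nadapt_le (B : BanachSeqSpace) {x : ℤ → X} (hx : memXB B x) :
    Nadapt B pd x ≤ (1 + 2 * pd.D) * NXB B x := by
  refine max_le (memXB_centr pd B hx).2 ((memXB_stun pd B hx).2.trans ?_)
  have := NXB_nonneg B x
  nlinarith [pd.hD]

lemma NXB_le_two_Nadapt (B : BanachSeqSpace) {x : ℤ → X} (hx : memXB B x) :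
    NXB B x ≤ 2 * Nadapt B pd x := by
  have h1 := (memXB_centr pd B hx).1
  have h2 := (memXB_stun pd B hx).1
  have h := memXB_add B h1 h2
  have he : (fun n => centr pd x n + stun pd x n) = x := by
    funext n; exact centr_add_stun pd x n
  rw [he] at h
  calc NXB B x ≤ NXB B (centr pd x) + NXB B (stun pd x) := h.2
    _ ≤ Nadapt B pd x + Nadapt B pd x := add_le_add (le_max_left _ _) (le_max_right _ _)
    _ = 2 * Nadapt B pd x := by ring

/-- centr of a pointwise sum -/
lemma Nadapt_add_le (B : BanachSeqSpace) {x y : ℤ → X} (hx : memXB B x) (hy : memXB B y) :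
    Nadapt B pd (fun n => x n + y n) ≤ Nadapt B pd x + Nadapt B pd y := by
  have hcx := (memXB_centr pd B hx).1
  have hcy := (memXB_centr pd B hy).1
  have hsx := (memXB_stun pd B hx).1
  have hsy := (memXB_stun pd B hy).1
  have hc : NXB B (centr pd (fun n => x n + y n))
      ≤ NXB B (centr pd x) + NXB B (centr pd y) := by
    have h := memXB_add B hcx hcy
    have he : (fun n => centr pd x n + centr pd y n) = centr pd (fun n => x n + y n) := by
      funext n; simp [centr_apply, map_add]
    rw [he] at h; exact h.2
  have hs : NXB B (stun pd (fun n => x n + y n))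
      ≤ NXB B (stun pd x) + NXB B (stun pd y) := by
    have h := memXB_add B hsx hsy
    have he : (fun n => stun pd x n + stun pd y n) = stun pd (fun n => x n + y n) := by
      funext n; simp only [stun_apply, map_add]; abel
    rw [he] at h; exact h.2
  refine max_le (hc.trans ?_) (hs.trans ?_)
  · exact add_le_add (le_max_left _ _) (le_max_left _ _)
  · exact add_le_add (le_max_right _ _) (le_max_right _ _)

/-- Nadapt vanishing forces the sequence to vanish -/
lemma eq_of_Nadapt_zero (B : BanachSeqSpace) {x : ℤ → X} (hx : memXB B x)
    (h : Nadapt B pd x ≤ 0) : ∀ n, x n = 0 := by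
  have hc := (memXB_centr pd B hx).1
  have hs := (memXB_stun pd B hx).1
  have h1 : NXB B (centr pd x) = 0 :=
    le_antisymm ((le_max_left _ _).trans h) (B.N_nonneg _)
  have h2 : NXB B (stun pd x) = 0 :=
    le_antisymm ((le_max_right _ _).trans h) (B.N_nonneg _)
  have hc0 := B.N_eq_zero _ hc h1
  have hs0 := B.N_eq_zero _ hs h2
  intro n
  have e1 : ‖centr pd x n‖ = 0 := congrFun hc0 n
  have e2 : ‖stun pd x n‖ = 0 := congrFun hs0 n
  rw [norm_eq_zero] at e1 e2
  rw [← centr_add_stun pd x n, e1, e2, add_zero]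

end CentrStun
section Complete

variable {X : Type*} [NormedAddCommGroup X] [NormedSpace ℝ X]

lemma geo_le (r : ℝ) (h0 : 0 ≤ r) (h1 : r < 1) (m : ℕ) :
    ∑ i ∈ Finset.range m, r ^ i ≤ (1 - r)⁻¹ := by
  have h := geom_sum_eq (ne_of_lt h1) m
  rw [h]
  have hr : 0 < 1 - r := by linarith
  have h2 : (r ^ m - 1) / (r - 1) = (1 - r ^ m) / (1 - r) := by
    rw [← neg_div_neg_eq]; ring_nf
  rw [h2, div_le_iff₀ hr, inv_mul_cancel₀ (ne_of_gt hr)]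
  have := pow_nonneg h0 m
  linarith

lemma complete_XB [CompleteSpace X] (B : AdmissibleBSS) (u : ℕ → ℤ → X) (C r : ℝ)
    (hC : 0 ≤ C) (hr0 : 0 ≤ r) (hr1 : r < 1)
    (hmem : ∀ k, memXB B.toBanachSeqSpace (u k))
    (hgeo : ∀ k, NXB B.toBanachSeqSpace (fun n => u (k+1) n - u k n) ≤ C * r ^ k) :
    ∃ z : ℤ → X, memXB B.toBanachSeqSpace z ∧
      ∀ k, memXB B.toBanachSeqSpace (fun n => u k n - z n) ∧
        NXB B.toBanachSeqSpace (fun n => u k n - z n) ≤ C * r ^ k * (1 - r)⁻¹ := by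
  have hr' : (0 : ℝ) < 1 - r := by linarith
  have hdmem : ∀ k, memXB B.toBanachSeqSpace (fun n => u (k+1) n - u k n) :=
    fun k => (memXB_sub B.toBanachSeqSpace (hmem (k+1)) (hmem k)).1
  -- Step A : pointwise limits
  have hpt : ∀ n : ℤ, ∃ l, Filter.Tendsto (fun k => u k n) Filter.atTop (nhds l) := by
    intro n
    have hppos := B.indicator_pos n
    apply cauchySeq_tendsto_of_complete
    apply cauchySeq_of_le_geometric r
      (C / B.N (fun j => if j = n then (1 : ℝ) else 0)) hr1
    intro k
    rw [dist_eq_norm, norm_sub_rev]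
    have h2 := norm_le_NXB B (hdmem k) n
    calc ‖u (k+1) n - u k n‖
        ≤ NXB B.toBanachSeqSpace (fun m => u (k+1) m - u k m)
            / B.N (fun j => if j = n then (1 : ℝ) else 0) := h2
      _ ≤ (C * r ^ k) / B.N (fun j => if j = n then (1 : ℝ) else 0) := by
          gcongr
          exact hgeo k
      _ = C / B.N (fun j => if j = n then (1 : ℝ) else 0) * r ^ k := by ring
  choose z hz using hpt
  -- Step B : per-k domination
  have main : ∀ k, memXB B.toBanachSeqSpace (fun n => u k n - z n) ∧
      NXB B.toBanachSeqSpace (fun n => u k n - z n) ≤ C * r ^ k * (1 - r)⁻¹ := by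
    intro k
    -- partial sums of tails starting at a
    set T : ℕ → ℕ → ℤ → ℝ :=
      fun a m => fun n => ∑ i ∈ Finset.range m, ‖u (a+i+1) n - u (a+i) n‖ with hT
    have hTmem : ∀ a m, B.toBanachSeqSpace.mem (T a m) := by
      intro a m
      induction m with
      | zero =>
        have h0 : T a 0 = 0 := by funext n; simp [hT]
        rw [h0]; exact B.zero_mem
      | succ m ih =>
        have h0 : T a (m+1) = T a m + (fun n => ‖u (a+m+1) n - u (a+m) n‖) := by
          funext n; simp [hT, Finset.sum_range_succ]
        rw [h0]
        exact B.add_mem _ _ ih (hdmem (a+m))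
    have hTbound : ∀ a m, B.N (T a m) ≤ C * r ^ a * (1 - r)⁻¹ := by
      intro a m
      have step : B.N (T a m) ≤ ∑ i ∈ Finset.range m, C * r ^ (a + i) := by
        induction m with
        | zero =>
          have h0 : T a 0 = 0 := by funext n; simp [hT]
          rw [h0, B.N_zero]; simp
        | succ m ih =>
          have he : T a (m+1) = T a m + (fun n => ‖u (a+m+1) n - u (a+m) n‖) := by
            funext n; simp [hT, Finset.sum_range_succ]
          rw [he, Finset.sum_range_succ]
          have h1 := B.N_add (T a m) _ (hTmem a m) (hdmem (a+m))
          exact h1.trans (add_le_add ih (hgeo (a+m)))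
      refine step.trans ?_
      have he : ∑ i ∈ Finset.range m, C * r ^ (a + i)
          = (C * r ^ a) * ∑ i ∈ Finset.range m, r ^ i := by
        rw [Finset.mul_sum]; congr 1; funext i; rw [pow_add]; ring
      rw [he]
      have hge := geo_le r hr0 hr1 m
      have hnn : (0:ℝ) ≤ C * r ^ a := by positivity
      exact mul_le_mul_of_nonneg_left hge hnn
    have hdiffTT : ∀ m m', m ≤ m' → (T k m' - T k m) = T (k+m) (m' - m) := by
      intro m m' hmm
      funext n
      have h1 : T k m' n = T k m n + T (k+m) (m'-m) n := by
        have h2 : m' = m + (m' - m) := by omega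
        rw [h2]
        simp only [hT]
        rw [Finset.sum_range_add]
        congr 1
        have h4 : m + (m' - m) - m = m' - m := by omega
        rw [h4]
        apply Finset.sum_congr rfl
        intro i _
        have e2 : k + (m + i) = k + m + i := by omega
        rw [e2]
      simp [h1]
    have hcauchy : ∀ ε > (0:ℝ), ∃ K : ℕ, ∀ j ≥ K, ∀ k' ≥ K,
        B.N ((fun m => T k m) j - (fun m => T k m) k') ≤ ε := by
      intro ε hε
      have htend : Filter.Tendsto (fun K : ℕ => C * r ^ (k+K) * (1 - r)⁻¹)
          Filter.atTop (nhds 0) := by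
        have h1 : Filter.Tendsto (fun K : ℕ => r ^ K) Filter.atTop (nhds 0) :=
          tendsto_pow_atTop_nhds_zero_of_lt_one hr0 hr1
        have h2 : (fun K : ℕ => C * r ^ (k+K) * (1 - r)⁻¹)
            = fun K : ℕ => (C * r ^ k * (1-r)⁻¹) * r ^ K := by
          funext K; rw [pow_add]; ring
        rw [h2]
        simpa using h1.const_mul (C * r ^ k * (1-r)⁻¹)
      obtain ⟨K, hK⟩ := Filter.eventually_atTop.mp (htend.eventually_lt_const hε)
      have key : ∀ j k', k' ≤ j → K ≤ k' → B.N (T k j - T k k') ≤ ε := by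
        intro j k' h hk'
        rw [hdiffTT k' j h]
        refine (hTbound (k+k') (j-k')).trans (le_of_lt (lt_of_le_of_lt ?_ (hK K le_rfl)))
        have hpow : r ^ (k + k') ≤ r ^ (k + K) :=
          pow_le_pow_of_le_one hr0 hr1.le (by omega)
        have h3 : (0:ℝ) ≤ (1-r)⁻¹ := by positivity
        exact mul_le_mul_of_nonneg_right (mul_le_mul_of_nonneg_left hpow hC) h3
      refine ⟨K, fun j hj k' hk' => ?_⟩
      simp only
      rcases le_total k' j with h | h
      · exact key j k' h hk'
      · have hneg : T k j - T k k' = (-1 : ℝ) • (T k k' - T k j) := by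
          funext n; simp
        have hm2 : B.toBanachSeqSpace.mem (T k k' - T k j) :=
          mem_sub' B.toBanachSeqSpace (hTmem k k') (hTmem k j)
        rw [hneg, B.N_smul (-1 : ℝ) (T k k' - T k j) hm2]
        simpa using key k' j h hj
    obtain ⟨v, hvmem, hvconv⟩ := B.complete (fun m => T k m) (hTmem k) hcauchy
    -- pointwise convergence of partial sums to v
    have hvpt : ∀ n, Filter.Tendsto (fun m => T k m n) Filter.atTop (nhds (v n)) := by
      intro n
      rw [Metric.tendsto_atTop]
      intro ε hε
      have hppos := B.indicator_pos n
      obtain ⟨K, hK⟩ := hvconv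
        (ε/2 * B.N (fun j => if j = n then (1:ℝ) else 0)) (by positivity)
      refine ⟨K, fun m hm => ?_⟩
      have habs := abs_le_N B
        (mem_sub' B.toBanachSeqSpace (hTmem k m) hvmem) n
      have hNle : B.N (fun j => T k m j - v j) ≤ ε/2 * B.N (fun j => if j = n then (1:ℝ) else 0) := hK m hm
      rw [Real.dist_eq]
      have h1 : |T k m n - v n| * B.N (fun j => if j = n then (1:ℝ) else 0)
          ≤ ε/2 * B.N (fun j => if j = n then (1:ℝ) else 0) := habs.trans hNle
      have h2 : |T k m n - v n| ≤ ε/2 := le_of_mul_le_mul_right h1 hppos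
      linarith
    have hmono : ∀ n, Monotone (fun m => T k m n) := by
      intro n m m' hmm
      simp only [hT]
      apply Finset.sum_le_sum_of_subset_of_nonneg (Finset.range_subset_range.2 hmm)
      intro i _ _; positivity
    have hSle : ∀ n m, T k m n ≤ v n := fun n m => (hmono n).ge_of_tendsto (hvpt n) m
    have htel : ∀ n m, ‖u k n - u (k+m) n‖ ≤ T k m n := by
      intro n m
      induction m with
      | zero => simp [hT]
      | succ m ih =>
        have h1 : ‖u k n - u (k+(m+1)) n‖
            ≤ ‖u k n - u (k+m) n‖ + ‖u (k+m) n - u (k+(m+1)) n‖ := by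
          have he : u k n - u (k+(m+1)) n
              = (u k n - u (k+m) n) + (u (k+m) n - u (k+(m+1)) n) := by abel
          rw [he]; exact norm_add_le _ _
        have e : k+(m+1) = k+m+1 := by omega
        have h2 : ‖u (k+m) n - u (k+(m+1)) n‖ = ‖u (k+m+1) n - u (k+m) n‖ := by
          rw [norm_sub_rev, e]
        have h3 : T k (m+1) n = T k m n + ‖u (k+m+1) n - u (k+m) n‖ := by
          simp [hT, Finset.sum_range_succ]
        rw [h3]
        rw [h2] at h1
        linarith [ih]
    have hptle : ∀ n, ‖u k n - z n‖ ≤ v n := by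
      intro n
      have h0 := (hz n).comp (Filter.tendsto_add_atTop_nat k)
      have he : (fun m => u (k+m) n) = (fun m => u (m+k) n) := by
        funext m; rw [Nat.add_comm k m]
      have h1 : Filter.Tendsto (fun m => u (k+m) n) Filter.atTop (nhds (z n)) := by
        rw [he]; exact h0
      have h2 : Filter.Tendsto (fun m => ‖u k n - u (k+m) n‖) Filter.atTop
          (nhds ‖u k n - z n‖) := (tendsto_const_nhds.sub h1).norm
      exact le_of_tendsto h2
        (Filter.Eventually.of_forall (fun m => (htel n m).trans (hSle n m)))
    have hNv : B.N v ≤ C * r ^ k * (1 - r)⁻¹ := by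
      refine le_of_forall_pos_le_add ?_
      intro δ hδ
      obtain ⟨K, hK⟩ := hvconv δ hδ
      have hmemd : B.toBanachSeqSpace.mem (fun n => v n - T k K n) :=
        mem_sub' B.toBanachSeqSpace hvmem (hTmem k K)
      have h1 : B.N v ≤ B.N (T k K) + B.N (fun n => v n - T k K n) := by
        have hadd := B.N_add (T k K) (fun n => v n - T k K n) (hTmem k K) hmemd
        have he2 : (T k K) + (fun n => v n - T k K n) = v := by funext n; simp
        rwa [he2] at hadd
      have h2 : B.N (fun n => v n - T k K n) ≤ δ := by
        have hneg : (fun n => v n - T k K n) = (-1 : ℝ) • (T k K - v) := by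
          funext n; simp
        have hm2 : B.toBanachSeqSpace.mem (T k K - v) :=
          mem_sub' B.toBanachSeqSpace (hTmem k K) hvmem
        rw [hneg, B.N_smul (-1 : ℝ) (T k K - v) hm2]
        simpa using hK K le_rfl
      linarith [hTbound k K]
    have hfin := solidX B.toBanachSeqSpace hvmem
      (x := fun n => u k n - z n) (fun n => hptle n)
    exact ⟨hfin.1, hfin.2.trans hNv⟩
  -- membership of z itself
  have h0 := (main 0).1
  have hzmem := (memXB_sub B.toBanachSeqSpace (hmem 0) h0).1
  have he : (fun n => u 0 n - (u 0 n - z n)) = z := by funext n; abel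
  rw [he] at hzmem
  exact ⟨z, hzmem, main⟩

end Complete
section MoreHelpers

variable {X : Type*} [NormedAddCommGroup X] [NormedSpace ℝ X]

lemma memXB_zero (B : BanachSeqSpace) : memXB B (0 : ℤ → X) := by
  show B.mem (fun n => ‖(0 : ℤ → X) n‖)
  have he : (fun n : ℤ => ‖(0 : ℤ → X) n‖) = (0 : ℤ → ℝ) := by funext n; simp
  rw [he]; exact B.zero_mem

lemma NXB_norm_congr (B : BanachSeqSpace) {x y : ℤ → X} (h : ∀ n, ‖x n‖ = ‖y n‖) :
    NXB B x = NXB B y := congrArg B.N (funext h)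

lemma Nadapt_zero (B : BanachSeqSpace) {A : ℤ → X →L[ℝ] X} (pd : PartialDichotomy A) :
    Nadapt B pd (0 : ℤ → X) = 0 := by
  have h1 : NXB B (centr pd (0 : ℤ → X)) = 0 := by
    have he : (fun n : ℤ => ‖centr pd (0 : ℤ → X) n‖) = (0 : ℤ → ℝ) := by
      funext n; simp [centr_apply]
    show B.N _ = 0
    rw [he, B.N_zero]
  have h2 : NXB B (stun pd (0 : ℤ → X)) = 0 := by
    have he : (fun n : ℤ => ‖stun pd (0 : ℤ → X) n‖) = (0 : ℤ → ℝ) := by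
      funext n; simp [stun_apply]
    show B.N _ = 0
    rw [he, B.N_zero]
  simp [Nadapt, h1, h2]

lemma Nadapt_shifted (B : AdmissibleBSS) {A : ℤ → X →L[ℝ] X} (pd : PartialDichotomy A)
    {d : ℤ → X} {s : ℤ → ℝ} (hs : B.mem s) {c' : ℝ} (hc' : 0 ≤ c')
    (hpt : ∀ n, ‖d n‖ ≤ c' * s (n-1)) :
    memXB B.toBanachSeqSpace d ∧
      Nadapt B.toBanachSeqSpace pd d ≤ (1 + 2*pd.D) * (c' * B.N s) := by
  have hsh := shift_one B hs
  have hd := solidX_smul B.toBanachSeqSpace hc' hsh.1 hpt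
  refine ⟨hd.1, (Nadapt_le pd _ hd.1).trans ?_⟩
  have h2 : NXB B.toBanachSeqSpace d ≤ c' * B.N s := by
    rw [← hsh.2]; exact hd.2
  exact mul_le_mul_of_nonneg_left h2 (by linarith [pd.hD])

end MoreHelpers

section NegHelper
variable {X : Type*} [NormedAddCommGroup X] [NormedSpace ℝ X]

lemma Nadapt_neg (B : BanachSeqSpace) {A : ℤ → X →L[ℝ] X} (pd : PartialDichotomy A)
    (x y : ℤ → X) (h : ∀ n, x n = -(y n)) :
    Nadapt B pd x = Nadapt B pd y := by
  have h1 : NXB B (centr pd x) = NXB B (centr pd y) :=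
    NXB_norm_congr B (fun n => by rw [centr_apply, centr_apply, h n, map_neg, norm_neg])
  have h2 : NXB B (stun pd x) = NXB B (stun pd y) :=
    NXB_norm_congr B (fun n => by
      rw [stun_apply, stun_apply, h n, map_neg, neg_sub_neg, norm_sub_rev])
  rw [Nadapt, Nadapt, h1, h2]

end NegHelper
theorem quasi_shadowing
    (X : Type*) [NormedAddCommGroup X] [NormedSpace ℝ X] [CompleteSpace X]
    (B : AdmissibleBSS) (A : ℤ → X →L[ℝ] X) (pd : PartialDichotomy A)
    (c : ℝ) (hc : 0 ≤ c)
    (f : ℤ → X → X) (hf : ∀ (n : ℤ) (x y : X), ‖f n x - f n y‖ ≤ c * ‖x - y‖)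
    (F : ℤ → X → X) (hF : ∀ (n : ℤ) (x : X), F n x = A n x + f n x)
    -- the operator 𝔸^{s,u} of Theorem admph, characterized by solving the
    -- difference equation x_n − A_{n−1}x_{n−1} = y_n on X_B^{s,u}
    (𝔸 : (ℤ → X) → (ℤ → X))
    (h𝔸map : ∀ y, memXBsu B.toBanachSeqSpace pd y → memXBsu B.toBanachSeqSpace pd (𝔸 y))
    (h𝔸char : ∀ x y, memXBsu B.toBanachSeqSpace pd x → memXBsu B.toBanachSeqSpace pd y →
      (𝔸 y = x ↔ ∀ n : ℤ, x n - A (n - 1) (x (n - 1)) = y n))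
    -- the operator G x = −x^c + 𝔸^{s,u} x^{s,u} and its norm w.r.t. ‖·‖'_B
    (G : (ℤ → X) → (ℤ → X))
    (hG : ∀ x : ℤ → X, G x = -centr pd x + 𝔸 (stun pd x))
    (normG : ℝ) (hnormG0 : 0 < normG)
    (hnormG : ∀ x, memXB B.toBanachSeqSpace x →
      Nadapt B.toBanachSeqSpace pd (G x) ≤ normG * Nadapt B.toBanachSeqSpace pd x)
    -- smallness condition
    (hsmall : 4 * c * pd.D * (1 + 2 * pd.D) * normG < 1) :
    ∃ L > (0 : ℝ), ∀ ε > (0 : ℝ), ∀ y : ℤ → X,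
      -- (δ, B)-pseudotrajectory with δ = Lε
      memXB B.toBanachSeqSpace (fun n => y (n + 1) - F n (y n)) →
      NXB B.toBanachSeqSpace (fun n => y (n + 1) - F n (y n)) ≤ L * ε →
      ∃ z : ℤ → X, memXB B.toBanachSeqSpace z ∧
        Nadapt B.toBanachSeqSpace pd z ≤ ε ∧
        ∀ n : ℤ, y (n + 1) + stun pd z (n + 1)
          = F n (y n + stun pd z n) + centr pd z (n + 1) := by
  by_cases hD : 1 ≤ 4 * pd.D
  -- Main case : 1 ≤ 4 D, fixed-point argument
  · set κ := normG * ((1 + 2*pd.D) * c) with hκdef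
    have h2D : (0:ℝ) < 1 + 2*pd.D := by linarith [pd.hD]
    have hκ0 : 0 ≤ κ := mul_nonneg hnormG0.le (mul_nonneg h2D.le hc)
    have hκ1 : κ < 1 := by
      nlinarith [mul_nonneg (mul_nonneg hc h2D.le) hnormG0.le]
    set L := (1-κ)/((1+2*pd.D) * normG) with hLdef
    have hL : 0 < L := div_pos (by linarith) (by positivity)
    refine ⟨L, hL, ?_⟩
    intro ε hε y hymem hyN
    set w : ℤ → X := fun n => y (n+1) - F n (y n) with hw
    set q : (ℤ → X) → (ℤ → X) :=
      fun x n => f (n-1) (y (n-1) + stun pd x (n-1)) - f (n-1) (y (n-1)) - w (n-1) with hq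
    set T : (ℤ → X) → (ℤ → X) := fun x => G (q x) with hTdef
    -- (1) stun of an X_B sequence lies in the stable-unstable subspace
    have h_su_stun : ∀ x, memXB B.toBanachSeqSpace x →
        memXBsu B.toBanachSeqSpace pd (stun pd x) := by
      intro x hx
      refine ⟨(memXB_stun pd B.toBanachSeqSpace hx).1, fun n => ?_⟩
      have h1 : pd.P1 n (stun pd x n) + pd.P2 n (stun pd x n)
          = pd.P1 n (x n) + pd.P2 n (x n) := by
        rw [stun_apply, map_sub, map_sub, (P1P3 pd n (x n)).1, (P2P3 pd n (x n)).1]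
        abel
      rw [h1, P12_eq pd n (x n), stun_apply]
    -- (2) the central part of an su sequence vanishes
    have hP3zero : ∀ x, memXBsu B.toBanachSeqSpace pd x → ∀ n, pd.P3 n (x n) = 0 := by
      intro x hx n
      have h2 := congrArg (fun v => pd.P3 n v) (hx.2 n)
      simp only [map_add, (P1P3 pd n (x n)).2, (P2P3 pd n (x n)).2, add_zero] at h2
      exact h2
    -- (3) su sequences are closed under subtraction
    have hsu_sub : ∀ a b, memXBsu B.toBanachSeqSpace pd a →
        memXBsu B.toBanachSeqSpace pd b →
        memXBsu B.toBanachSeqSpace pd (fun n => a n - b n) := by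
      intro a b ha hb
      refine ⟨(memXB_sub B.toBanachSeqSpace ha.1 hb.1).1, fun n => ?_⟩
      show a n - b n = pd.P1 n (a n - b n) + pd.P2 n (a n - b n)
      conv_lhs => rw [ha.2 n, hb.2 n]
      rw [map_sub, map_sub]
      abel
    -- (4) 𝔸 is subtractive on the su subspace
    have h𝔸sub : ∀ a b, memXBsu B.toBanachSeqSpace pd a →
        memXBsu B.toBanachSeqSpace pd b →
        (fun n => 𝔸 a n - 𝔸 b n) = 𝔸 (fun n => a n - b n) := by
      intro a b ha hb
      have hAa := (h𝔸char (𝔸 a) a (h𝔸map a ha) ha).mp rfl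
      have hAb := (h𝔸char (𝔸 b) b (h𝔸map b hb) hb).mp rfl
      refine ((h𝔸char (fun n => 𝔸 a n - 𝔸 b n) (fun n => a n - b n)
        (hsu_sub _ _ (h𝔸map a ha) (h𝔸map b hb)) (hsu_sub _ _ ha hb)).mpr ?_).symm
      intro n
      have e1 := hAa n
      have e2 := hAb n
      rw [map_sub, ← e1, ← e2]
      abel
    -- (5) decomposition of G
    have hGdec : ∀ x, memXB B.toBanachSeqSpace x →
        (∀ n, G x n = -(pd.P3 n (x n)) + 𝔸 (stun pd x) n) ∧
        (∀ n, pd.P3 n (G x n) = -(pd.P3 n (x n))) ∧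
        stun pd (G x) = 𝔸 (stun pd x) ∧ memXB B.toBanachSeqSpace (G x) := by
      intro x hx
      have hsu := h_su_stun x hx
      have hAsu := h𝔸map _ hsu
      have hGx : ∀ n, G x n = -(pd.P3 n (x n)) + 𝔸 (stun pd x) n := by
        intro n
        have h := congrFun (hG x) n
        simpa [centr_apply] using h
      have hc3 : ∀ n, pd.P3 n (G x n) = -(pd.P3 n (x n)) := by
        intro n
        rw [hGx n, map_add, map_neg, P3_idem, hP3zero _ hAsu n, add_zero]
      have hs : stun pd (G x) = 𝔸 (stun pd x) := by
        funext n
        rw [stun_apply, hc3 n, hGx n]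
        abel
      have hmemG : memXB B.toBanachSeqSpace (G x) := by
        have h1 : memXB B.toBanachSeqSpace (fun n => -(pd.P3 n (x n))) :=
          (solidX_smul B.toBanachSeqSpace (C := 1 + 2*pd.D) (by linarith [pd.hD]) hx
            (fun n => by rw [norm_neg]; exact norm_P3_le pd n (x n))).1
        have h2 := (memXB_add B.toBanachSeqSpace h1 hAsu.1).1
        have he : (fun n => -(pd.P3 n (x n)) + 𝔸 (stun pd x) n) = G x :=
          funext (fun n => (hGx n).symm)
        rwa [he] at h2
      exact ⟨hGx, hc3, hs, hmemG⟩
    -- (6) membership of q x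
    have hqmem : ∀ x, memXB B.toBanachSeqSpace x → memXB B.toBanachSeqSpace (q x) := by
      intro x hx
      have hsmem : B.toBanachSeqSpace.mem (fun m => c * ‖stun pd x m‖ + ‖w m‖) := by
        have h1 := B.smul_mem c _ (memXB_stun pd B.toBanachSeqSpace hx).1
        exact B.add_mem _ _ h1 hymem
      have hpt : ∀ n, ‖q x n‖ ≤ 1 * (c * ‖stun pd x (n-1)‖ + ‖w (n-1)‖) := by
        intro n
        rw [one_mul]
        show ‖f (n-1) (y (n-1) + stun pd x (n-1)) - f (n-1) (y (n-1)) - w (n-1)‖ ≤ _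
        refine (norm_sub_le _ _).trans (add_le_add ?_ le_rfl)
        have h3 := hf (n-1) (y (n-1) + stun pd x (n-1)) (y (n-1))
        rwa [add_sub_cancel_left] at h3
      exact (Nadapt_shifted B pd hsmem zero_le_one hpt).1
    have hTmemX : ∀ x, memXB B.toBanachSeqSpace x →
        memXB B.toBanachSeqSpace (T x) :=
      fun x hx => (hGdec (q x) (hqmem x hx)).2.2.2
    -- (7) contraction property
    have hcontr : ∀ a b, memXB B.toBanachSeqSpace a → memXB B.toBanachSeqSpace b →
        Nadapt B.toBanachSeqSpace pd (fun n => T a n - T b n)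
          ≤ κ * Nadapt B.toBanachSeqSpace pd (fun n => a n - b n) := by
      intro a b ha hb
      have hqa := hqmem a ha
      have hqb := hqmem b hb
      have hdmem : memXB B.toBanachSeqSpace (fun n => q a n - q b n) :=
        (memXB_sub B.toBanachSeqSpace hqa hqb).1
      -- T a - T b = G (q a - q b)
      have hstund : (fun n => stun pd (q a) n - stun pd (q b) n)
          = stun pd (fun n => q a n - q b n) := by
        funext m
        simp only [stun_apply, map_sub]
        abel
      have hAsub := h𝔸sub (stun pd (q a)) (stun pd (q b))
        (h_su_stun _ hqa) (h_su_stun _ hqb)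
      rw [hstund] at hAsub
      have hTsub : (fun n => T a n - T b n) = G (fun n => q a n - q b n) := by
        funext n
        have h1 := (hGdec (q a) hqa).1 n
        have h2 := (hGdec (q b) hqb).1 n
        have h3 := (hGdec (fun n => q a n - q b n) hdmem).1 n
        have h4 : 𝔸 (stun pd (fun n => q a n - q b n)) n
            = 𝔸 (stun pd (q a)) n - 𝔸 (stun pd (q b)) n :=
          (congrFun hAsub n).symm
        have h5 : pd.P3 n (q a n - q b n) = pd.P3 n (q a n) - pd.P3 n (q b n) :=
          map_sub _ _ _
        show G (q a) n - G (q b) n = G (fun n => q a n - q b n) n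
        rw [h1, h2, h3, h4, h5]
        abel
      rw [hTsub]
      refine (hnormG _ hdmem).trans ?_
      -- bound Nadapt (q a - q b)
      have hab : memXB B.toBanachSeqSpace (fun n => a n - b n) :=
        (memXB_sub B.toBanachSeqSpace ha hb).1
      have hstunab := (memXB_stun pd B.toBanachSeqSpace hab).1
      have hdpt : ∀ n, ‖q a n - q b n‖
          ≤ c * ‖stun pd (fun m => a m - b m) (n-1)‖ := by
        intro n
        have he1 : q a n - q b n = f (n-1) (y (n-1) + stun pd a (n-1))
            - f (n-1) (y (n-1) + stun pd b (n-1)) := by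
          show (f (n-1) (y (n-1) + stun pd a (n-1)) - f (n-1) (y (n-1)) - w (n-1))
            - (f (n-1) (y (n-1) + stun pd b (n-1)) - f (n-1) (y (n-1)) - w (n-1)) = _
          abel
        rw [he1]
        refine (hf (n-1) _ _).trans ?_
        have he2 : (y (n-1) + stun pd a (n-1)) - (y (n-1) + stun pd b (n-1))
            = stun pd (fun m => a m - b m) (n-1) := by
          simp only [stun_apply, map_sub]
          abel
        rw [he2]
      have hqbound := Nadapt_shifted B pd (d := fun n => q a n - q b n)
        (s := fun m => ‖stun pd (fun m' => a m' - b m') m‖) hstunab hc hdpt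
      refine (mul_le_mul_of_nonneg_left hqbound.2 hnormG0.le).trans ?_
      have hfin : NXB B.toBanachSeqSpace (stun pd (fun m => a m - b m))
          ≤ Nadapt B.toBanachSeqSpace pd (fun n => a n - b n) := le_max_right _ _
      have h6 : (0:ℝ) ≤ normG * ((1 + 2*pd.D) * c) := hκ0
      calc normG * ((1 + 2*pd.D) * (c * NXB B.toBanachSeqSpace
              (stun pd (fun m => a m - b m))))
          = κ * NXB B.toBanachSeqSpace (stun pd (fun m => a m - b m)) := by
            rw [hκdef]; ring
        _ ≤ κ * Nadapt B.toBanachSeqSpace pd (fun n => a n - b n) :=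
            mul_le_mul_of_nonneg_left hfin hκ0
    -- (8) bound on T 0
    have hmem0 : memXB B.toBanachSeqSpace (0 : ℤ → X) := memXB_zero B.toBanachSeqSpace
    have hT0 : Nadapt B.toBanachSeqSpace pd (T 0) ≤ (1-κ)*ε := by
      have hq0 : ∀ n, q (0 : ℤ → X) n = -w (n-1) := by
        intro n
        show f (n-1) (y (n-1) + stun pd 0 (n-1)) - f (n-1) (y (n-1)) - w (n-1) = _
        have : stun pd (0 : ℤ → X) (n-1) = 0 := by simp [stun_apply]
        rw [this, add_zero, sub_self, zero_sub]
      have hq0b := Nadapt_shifted B pd (d := q (0 : ℤ → X))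
        (s := fun m => ‖w m‖) hymem zero_le_one
        (fun n => by rw [hq0 n, norm_neg, one_mul])
      have h1 : Nadapt B.toBanachSeqSpace pd (T 0)
          ≤ normG * Nadapt B.toBanachSeqSpace pd (q 0) := hnormG _ (hqmem 0 hmem0)
      refine h1.trans ((mul_le_mul_of_nonneg_left hq0b.2 hnormG0.le).trans ?_)
      have hNw : NXB B.toBanachSeqSpace w ≤ L * ε := hyN
      have h2 : B.N (fun m => ‖w m‖) = NXB B.toBanachSeqSpace w := rfl
      rw [h2, one_mul]
      have h3 : normG * ((1 + 2*pd.D) * NXB B.toBanachSeqSpace w)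
          ≤ normG * ((1 + 2*pd.D) * (L * ε)) := by
        refine mul_le_mul_of_nonneg_left ?_ hnormG0.le
        exact mul_le_mul_of_nonneg_left hNw h2D.le
      refine h3.trans ?_
      have hne1 : (1 + 2*pd.D) ≠ 0 := ne_of_gt h2D
      have hne2 : normG ≠ 0 := ne_of_gt hnormG0
      have heq : normG * ((1 + 2*pd.D) * (L * ε)) = (1-κ)*ε := by
        rw [hLdef]; field_simp
      exact le_of_eq heq
    -- (9) Picard iteration
    set U : ℕ → ℤ → X := fun k => T^[k] (0 : ℤ → X) with hU
    have hU0 : U 0 = (0 : ℤ → X) := rfl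
    have hUsucc : ∀ k, U (k+1) = T (U k) := fun k => Function.iterate_succ_apply' T k 0
    have hUmem : ∀ k, memXB B.toBanachSeqSpace (U k) := by
      intro k; induction k with
      | zero => rw [hU0]; exact hmem0
      | succ k ih => rw [hUsucc k]; exact hTmemX _ ih
    have hUball : ∀ k, Nadapt B.toBanachSeqSpace pd (U k) ≤ ε := by
      intro k; induction k with
      | zero => rw [hU0, Nadapt_zero]; linarith
      | succ k ih =>
        have h1 : Nadapt B.toBanachSeqSpace pd (fun n => T (U k) n - T 0 n)
            ≤ κ * Nadapt B.toBanachSeqSpace pd (fun n => U k n - (0:ℤ→X) n) :=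
          hcontr (U k) 0 (hUmem k) hmem0
        have he0 : (fun n => U k n - (0:ℤ→X) n) = U k := by funext n; simp
        rw [he0] at h1
        have heq : T (U k) = (fun n => (T (U k) n - T 0 n) + T 0 n) :=
          funext fun n => by abel
        rw [hUsucc k, heq]
        refine (Nadapt_add_le pd B.toBanachSeqSpace
          (memXB_sub B.toBanachSeqSpace (hTmemX _ (hUmem k)) (hTmemX _ hmem0)).1
          (hTmemX _ hmem0)).trans ?_
        have h4 : κ * Nadapt B.toBanachSeqSpace pd (U k) ≤ κ * ε :=
          mul_le_mul_of_nonneg_left ih hκ0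
        linarith [hT0, h1]
    have hUgeoN : ∀ k, NXB B.toBanachSeqSpace (fun n => U (k+1) n - U k n)
        ≤ (2*((1-κ)*ε)) * κ^k := by
      have hNad : ∀ k, Nadapt B.toBanachSeqSpace pd (fun n => U (k+1) n - U k n)
          ≤ κ^k * ((1-κ)*ε) := by
        intro k; induction k with
        | zero =>
          have he : (fun n => U 1 n - U 0 n) = T 0 := by
            funext n; rw [hUsucc 0, hU0]; simp
          rw [he]; simpa using hT0
        | succ k ih =>
          have he : (fun n => U (k+2) n - U (k+1) n)
              = (fun n => T (U (k+1)) n - T (U k) n) := by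
            funext n; rw [hUsucc (k+1), hUsucc k]
          rw [he]
          refine (hcontr _ _ (hUmem (k+1)) (hUmem k)).trans ?_
          calc κ * Nadapt B.toBanachSeqSpace pd (fun n => U (k+1) n - U k n)
              ≤ κ * (κ^k * ((1-κ)*ε)) := mul_le_mul_of_nonneg_left ih hκ0
            _ = κ^(k+1) * ((1-κ)*ε) := by ring
      intro k
      have hm := (memXB_sub B.toBanachSeqSpace (hUmem (k+1)) (hUmem k)).1
      refine (NXB_le_two_Nadapt pd _ hm).trans ?_
      calc 2 * Nadapt B.toBanachSeqSpace pd (fun n => U (k+1) n - U k n)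
          ≤ 2 * (κ^k * ((1-κ)*ε)) := by linarith [hNad k]
        _ = (2*((1-κ)*ε)) * κ^k := by ring
    have hC0 : (0:ℝ) ≤ 2*((1-κ)*ε) := by nlinarith
    obtain ⟨z, hzmem, hzk⟩ := complete_XB B U (2*((1-κ)*ε)) κ hC0 hκ0 hκ1 hUmem hUgeoN
    -- distance between iterates and the limit in the adapted norm
    set Cst : ℝ := (1+2*pd.D) * (2*((1-κ)*ε)) * (1-κ)⁻¹ with hCst
    have hCst0 : 0 ≤ Cst := by
      have h9 : (0:ℝ) < 1 - κ := by linarith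
      rw [hCst]
      exact mul_nonneg (mul_nonneg h2D.le hC0) (inv_nonneg.mpr h9.le)
    have hdz : ∀ k, Nadapt B.toBanachSeqSpace pd (fun n => U k n - z n) ≤ Cst * κ^k := by
      intro k
      have hm := (hzk k).1
      refine (Nadapt_le pd _ hm).trans ?_
      refine (mul_le_mul_of_nonneg_left (hzk k).2 h2D.le).trans_eq ?_
      rw [hCst]; ring
    have hdz' : ∀ k, Nadapt B.toBanachSeqSpace pd (fun n => z n - U k n) ≤ Cst * κ^k := by
      intro k
      have he := Nadapt_neg B.toBanachSeqSpace pd (fun n => z n - U k n)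
        (fun n => U k n - z n) (fun n => (neg_sub _ _).symm)
      rw [he]; exact hdz k
    have hMtend : Filter.Tendsto (fun k : ℕ => Cst * κ^k) Filter.atTop (nhds 0) := by
      have h1 := tendsto_pow_atTop_nhds_zero_of_lt_one hκ0 hκ1
      simpa using h1.const_mul Cst
    -- the adapted norm of z is at most ε
    have hNz : Nadapt B.toBanachSeqSpace pd z ≤ ε := by
      refine le_of_forall_pos_le_add ?_
      intro δ hδ
      obtain ⟨k, hk⟩ := Filter.eventually_atTop.mp (hMtend.eventually_lt_const hδ)
      have heq : z = (fun n => U k n + (z n - U k n)) := funext fun n => by abel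
      have h3 : Nadapt B.toBanachSeqSpace pd z
          ≤ Nadapt B.toBanachSeqSpace pd (U k)
            + Nadapt B.toBanachSeqSpace pd (fun n => z n - U k n) := by
        conv_lhs => rw [heq]
        exact Nadapt_add_le pd B.toBanachSeqSpace (hUmem k)
          (memXB_sub B.toBanachSeqSpace hzmem (hUmem k)).1
      have h5 := hk k le_rfl
      linarith [hUball k, hdz' k]
    -- z is a fixed point of T
    have hTz := hTmemX z hzmem
    have hfix0 : Nadapt B.toBanachSeqSpace pd (fun n => z n - T z n) ≤ 0 := by
      refine le_of_forall_pos_le_add ?_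
      intro δ hδ
      rw [zero_add]
      obtain ⟨k, hk⟩ := Filter.eventually_atTop.mp
        (hMtend.eventually_lt_const (half_pos hδ))
      have h1 : Nadapt B.toBanachSeqSpace pd (fun n => z n - U (k+1) n)
          ≤ Cst * κ^(k+1) := hdz' (k+1)
      have h2 : Nadapt B.toBanachSeqSpace pd (fun n => U (k+1) n - T z n)
          ≤ κ * (Cst * κ^k) := by
        have he : (fun n => U (k+1) n - T z n) = (fun n => T (U k) n - T z n) := by
          funext n; rw [hUsucc k]
        rw [he]
        exact (hcontr _ _ (hUmem k) hzmem).trans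
          (mul_le_mul_of_nonneg_left (hdz k) hκ0)
      have heq : (fun n => z n - T z n)
          = (fun n => (z n - U (k+1) n) + (U (k+1) n - T z n)) := funext fun n => by abel
      have h3 : Nadapt B.toBanachSeqSpace pd (fun n => z n - T z n)
          ≤ Cst * κ^(k+1) + κ * (Cst * κ^k) := by
        rw [heq]
        exact (Nadapt_add_le pd B.toBanachSeqSpace
          (memXB_sub B.toBanachSeqSpace hzmem (hUmem (k+1))).1
          (memXB_sub B.toBanachSeqSpace (hUmem (k+1)) hTz).1).trans (add_le_add h1 h2)
      have h4 : Cst * κ^(k+1) ≤ Cst * κ^k :=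
        mul_le_mul_of_nonneg_left (pow_le_pow_of_le_one hκ0 hκ1.le (Nat.le_succ k)) hCst0
      have h6 : κ * (Cst * κ^k) ≤ Cst * κ^k := by
        have h7 : 0 ≤ Cst * κ^k := mul_nonneg hCst0 (pow_nonneg hκ0 k)
        nlinarith
      have h8 := hk k le_rfl
      linarith
    have hfix : ∀ n, z n = T z n := by
      intro n
      have h := eq_of_Nadapt_zero pd B.toBanachSeqSpace
        (memXB_sub B.toBanachSeqSpace hzmem hTz).1 hfix0 n
      exact sub_eq_zero.mp h
    -- conclusion : derive the shadowing identity
    have hqz := hqmem z hzmem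
    have hGd := hGdec (q z) hqz
    have hcz : ∀ m, pd.P3 m (z m) = -(pd.P3 m (q z m)) := by
      intro m
      rw [hfix m]
      exact hGd.2.1 m
    have hsz : stun pd z = 𝔸 (stun pd (q z)) := by
      have he : stun pd z = stun pd (T z) := by
        funext m; rw [stun_apply, stun_apply, hfix m]
      rw [he]
      exact hGd.2.2.1
    have hchar := (h𝔸char (stun pd z) (stun pd (q z)) (h_su_stun z hzmem)
      (h_su_stun (q z) hqz)).mp hsz.symm
    refine ⟨z, hzmem, hNz, ?_⟩
    intro n
    have hmain := hchar (n+1)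
    have e : (n:ℤ)+1-1 = n := by ring
    rw [e] at hmain
    have h2 : stun pd (q z) (n+1) = q z (n+1) + centr pd z (n+1) := by
      rw [stun_apply, centr_apply, hcz (n+1)]
      abel
    have h3 : q z (n+1) = f n (y n + stun pd z n) - f n (y n) - w n := by
      show f ((n+1)-1) (y ((n+1)-1) + stun pd z ((n+1)-1)) - f ((n+1)-1) (y ((n+1)-1))
        - w ((n+1)-1) = _
      rw [e]
    have hwn : w n = y (n+1) - (A n (y n) + f n (y n)) := by
      show y (n+1) - F n (y n) = _
      rw [hF]
    rw [h2, h3] at hmain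
    rw [sub_eq_iff_eq_add] at hmain
    rw [hmain, hF n (y n + stun pd z n), map_add, hwn]
    abel
  -- Degenerate case : D < 1/4, so the projections P1 and P2 vanish.
  · push_neg at hD
    have hDlt : pd.D < 1 := by linarith
    have hP1 : ∀ (n : ℤ) (x : X), pd.P1 n x = 0 := by
      intro n x
      have h2 : ‖pd.P1 n x‖ ≤ pd.D * ‖pd.P1 n x‖ := by
        have h := norm_P1_le pd n (pd.P1 n x)
        rwa [P1_idem pd n x] at h
      have h3 : ‖pd.P1 n x‖ ≤ 0 := by nlinarith [norm_nonneg (pd.P1 n x)]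
      exact norm_le_zero_iff.mp h3
    have hP2 : ∀ (n : ℤ) (x : X), pd.P2 n x = 0 := by
      intro n x
      have h2 : ‖pd.P2 n x‖ ≤ pd.D * ‖pd.P2 n x‖ := by
        have h := norm_P2_le pd n (pd.P2 n x)
        rwa [P2_idem pd n x] at h
      have h3 : ‖pd.P2 n x‖ ≤ 0 := by nlinarith [norm_nonneg (pd.P2 n x)]
      exact norm_le_zero_iff.mp h3
    have hP3 : ∀ (n : ℤ) (x : X), pd.P3 n x = x := by
      intro n x
      have h := pd.sum_eq n x
      rwa [hP1, hP2, zero_add, zero_add] at h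
    refine ⟨1, one_pos, ?_⟩
    intro ε hε y hymem hyN
    set z : ℤ → X := fun n => (fun m => y (m+1) - F m (y m)) (n - 1) with hz
    have hzmem : memXB B.toBanachSeqSpace z :=
      (shift_one B (s := fun n => ‖y (n+1) - F n (y n)‖) hymem).1
    have hstunz : ∀ n, stun pd z n = 0 := by
      intro n; rw [stun_apply, hP3, sub_self]
    have hcentrz : ∀ n, centr pd z n = z n := by
      intro n; rw [centr_apply, hP3]
    refine ⟨z, hzmem, ?_, ?_⟩
    · have h1 : NXB B.toBanachSeqSpace (stun pd z) = 0 := by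
        have he : (fun n : ℤ => ‖stun pd z n‖) = (0 : ℤ → ℝ) := by
          funext n; rw [hstunz n]; simp
        show B.N _ = 0
        rw [he, B.N_zero]
      have h2 : NXB B.toBanachSeqSpace (centr pd z) = NXB B.toBanachSeqSpace z :=
        NXB_norm_congr B.toBanachSeqSpace (fun n => by rw [hcentrz n])
      have h3 : NXB B.toBanachSeqSpace z
          = NXB B.toBanachSeqSpace (fun n => y (n+1) - F n (y n)) :=
        (shift_one B (s := fun n => ‖y (n+1) - F n (y n)‖) hymem).2
      rw [Nadapt, h1, h2, h3]
      rw [one_mul] at hyN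
      exact max_le hyN hε.le
    · intro n
      rw [hstunz, hstunz, hcentrz, add_zero, add_zero]
      have he : n + 1 - 1 = n := by ring
      rw [hz]
      simp only [he]
      abel
end

section
/- Under the hypotheses of the quasi-shadowing theorem (partial exponential dichotomy, Lipschitz perturbations with 4cD(1+2D)‖G‖ < 1), the quasi-shadowing sequence z = (z_n) ∈ X_B with ‖z‖_B' ≤ ε satisfying x_{n+1} = F_n(x_n) + z_{n+1}^c (x_n = y_n + z_n^{s,u}) for a given (δ,B)-pseudotrajectory (y_n), δ = Lε, is unique. -/
variable {X : Type*} [NormedAddCommGroup X] [NormedSpace ℝ X]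

/- STATEMENT 11: uniqueness of the quasi-shadowing sequence. Under the hypotheses of
the quasi-shadowing theorem (4cD(1+2D)‖G‖ < 1), for a given (Lε, B)-pseudotrajectory
(y_n) the sequence z = (z_n) ∈ X_B with ‖z‖'_B ≤ ε satisfying
x_{n+1} = F_n(x_n) + z_{n+1}^c (x_n = y_n + z_n^{s,u}) is unique. -/
theorem quasi_shadowing_unique
    (X : Type*) [NormedAddCommGroup X] [NormedSpace ℝ X] [CompleteSpace X]
    (B : AdmissibleBSS) (A : ℤ → X →L[ℝ] X) (pd : PartialDichotomy A)
    (c : ℝ) (hc : 0 ≤ c)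
    (f : ℤ → X → X) (hf : ∀ (n : ℤ) (x y : X), ‖f n x - f n y‖ ≤ c * ‖x - y‖)
    (F : ℤ → X → X) (hF : ∀ (n : ℤ) (x : X), F n x = A n x + f n x)
    (𝔸 : (ℤ → X) → (ℤ → X))
    (h𝔸map : ∀ y, memXBsu B.toBanachSeqSpace pd y → memXBsu B.toBanachSeqSpace pd (𝔸 y))
    (h𝔸char : ∀ x y, memXBsu B.toBanachSeqSpace pd x → memXBsu B.toBanachSeqSpace pd y →
      (𝔸 y = x ↔ ∀ n : ℤ, x n - A (n - 1) (x (n - 1)) = y n))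
    (G : (ℤ → X) → (ℤ → X))
    (hG : ∀ x : ℤ → X, G x = -centr pd x + 𝔸 (stun pd x))
    (normG : ℝ) (hnormG0 : 0 < normG)
    (hnormG : ∀ x, memXB B.toBanachSeqSpace x →
      Nadapt B.toBanachSeqSpace pd (G x) ≤ normG * Nadapt B.toBanachSeqSpace pd x)
    (hsmall : 4 * c * pd.D * (1 + 2 * pd.D) * normG < 1) :
    ∃ L > (0 : ℝ), ∀ ε > (0 : ℝ), ∀ y : ℤ → X,
      memXB B.toBanachSeqSpace (fun n => y (n + 1) - F n (y n)) →
      NXB B.toBanachSeqSpace (fun n => y (n + 1) - F n (y n)) ≤ L * ε →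
      ∀ z z' : ℤ → X,
        memXB B.toBanachSeqSpace z → Nadapt B.toBanachSeqSpace pd z ≤ ε →
        (∀ n : ℤ, y (n + 1) + stun pd z (n + 1)
          = F n (y n + stun pd z n) + centr pd z (n + 1)) →
        memXB B.toBanachSeqSpace z' → Nadapt B.toBanachSeqSpace pd z' ≤ ε →
        (∀ n : ℤ, y (n + 1) + stun pd z' (n + 1)
          = F n (y n + stun pd z' n) + centr pd z' (n + 1)) →
        z = z' := by
    -- general pointwise facts
  have hproj3 : ∀ (n : ℤ) (x : X), pd.P3 n (pd.P3 n x) = pd.P3 n x := by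
    intro n x
    have := DFunLike.congr_fun (pd.proj3 n) x
    simpa using this
  have hP3stun : ∀ (v : ℤ → X) (n : ℤ), pd.P3 n (stun pd v n) = 0 := by
    intro v n
    simp [stun, map_sub, hproj3]
  have hstun_sum : ∀ (v : ℤ → X) (n : ℤ),
      stun pd v n = pd.P1 n (v n) + pd.P2 n (v n) := by
    intro v n
    have s := pd.sum_eq n (v n)
    show v n - pd.P3 n (v n) = _
    exact sub_eq_iff_eq_add.mpr s.symm
  have hstun_decomp : ∀ (v : ℤ → X) (n : ℤ),
      stun pd v n = pd.P1 n (stun pd v n) + pd.P2 n (stun pd v n) := by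
    intro v n
    have s := pd.sum_eq n (stun pd v n)
    rw [hP3stun, add_zero] at s
    exact s.symm
  have hP1D : ∀ n : ℤ, ‖pd.P1 n‖ ≤ pd.D := by
    intro n
    have := pd.bound1 n 0
    simpa [fcoc] using this
  have hP2D : ∀ n : ℤ, ‖pd.P2 n‖ ≤ pd.D := by
    intro n
    have := pd.bound2 n n le_rfl
    simpa [pd.V_self] using this
  have hstun_bd : ∀ (v : ℤ → X) (n : ℤ), ‖stun pd v n‖ ≤ 2 * pd.D * ‖v n‖ := by
    intro v n
    rw [hstun_sum]
    have h1 := (pd.P1 n).le_opNorm (v n)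
    have h2 := (pd.P2 n).le_opNorm (v n)
    have h1' := mul_le_mul_of_nonneg_right (hP1D n) (norm_nonneg (v n))
    have h2' := mul_le_mul_of_nonneg_right (hP2D n) (norm_nonneg (v n))
    have h3 := norm_add_le (pd.P1 n (v n)) (pd.P2 n (v n))
    linarith
  have hcentr_bd : ∀ (v : ℤ → X) (n : ℤ), ‖centr pd v n‖ ≤ (1 + 2 * pd.D) * ‖v n‖ := by
    intro v n
    have hd : centr pd v n = v n - stun pd v n := by
      simp [centr, stun]
    rw [hd]
    have h1 := hstun_bd v n
    have h2 := norm_sub_le (v n) (stun pd v n)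
    nlinarith [norm_nonneg (v n)]
  refine ⟨1, one_pos, ?_⟩
  intro ε hε y hymem hybd z z' mz hzε hzrec mz' hz'ε hz'rec
  by_cases hPz : ∀ n : ℤ, pd.P1 n = 0 ∧ pd.P2 n = 0
  · -- degenerate case: no stable/unstable directions
    have hstun0 : ∀ (v : ℤ → X) (n : ℤ), stun pd v n = 0 := by
      intro v n
      rw [hstun_sum, (hPz n).1, (hPz n).2]
      simp
    have hcentr' : ∀ (v : ℤ → X) (n : ℤ), v n = centr pd v n := by
      intro v n
      have h2 : v n - pd.P3 n (v n) = 0 := hstun0 v n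
      have h3 : v n = pd.P3 n (v n) := by rwa [sub_eq_zero] at h2
      exact h3
    funext n
    have hm : n - 1 + 1 = n := by omega
    have e1 := hzrec (n - 1)
    have e2 := hz'rec (n - 1)
    rw [hm] at e1 e2
    simp only [hstun0, add_zero] at e1 e2
    have h3 : centr pd z n = centr pd z' n := add_left_cancel (e1.symm.trans e2)
    rw [hcentr' z n, hcentr' z' n]
    exact h3
  · -- main case: some projection is nontrivial, so D ≥ 1
    push_neg at hPz
    obtain ⟨n₀, hn₀⟩ := hPz
    have hproj_norm : ∀ (P : X →L[ℝ] X), P.comp P = P → P ≠ 0 → 1 ≤ ‖P‖ := by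
      intro P hP hne
      obtain ⟨v, hv⟩ : ∃ v, P v ≠ 0 := by
        by_contra hco
        push_neg at hco
        exact hne (ContinuousLinearMap.ext fun v => by simp [hco v])
      have hPP : P (P v) = P v := by
        have := DFunLike.congr_fun hP v
        simpa using this
      have h2 : ‖P v‖ ≤ ‖P‖ * ‖P v‖ := by
        conv_lhs => rw [← hPP]
        exact P.le_opNorm (P v)
      have h3 : 0 < ‖P v‖ := norm_pos_iff.mpr hv
      nlinarith
    have hD1 : 1 ≤ pd.D := by
      by_cases h1 : pd.P1 n₀ = 0
      · exact le_trans (hproj_norm _ (pd.proj2 n₀) (hn₀ h1)) (hP2D n₀)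
      · exact le_trans (hproj_norm _ (pd.proj1 n₀) h1) (hP1D n₀)
    have hD0 : (0:ℝ) < pd.D := pd.hD
    set w : ℤ → X := fun n => z n - z' n with hw
    set g : ℤ → X := fun n => f n (y n + stun pd z n) - f n (y n + stun pd z' n) with hg
    set h : ℤ → X := fun n => g (n - 1) with hh
    have hsub : ∀ n : ℤ, stun pd w n = stun pd z n - stun pd z' n := by
      intro n
      simp only [hw, stun, map_sub]
      abel
    have hcsub : ∀ n : ℤ, centr pd w n = centr pd z n - centr pd z' n := by
      intro n
      simp [hw, centr, map_sub]
    have hgb : ∀ n : ℤ, ‖g n‖ ≤ c * ‖stun pd w n‖ := by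
      intro n
      have hd : (y n + stun pd z n) - (y n + stun pd z' n) = stun pd w n := by
        rw [hsub]; abel
      have h1 := hf n (y n + stun pd z n) (y n + stun pd z' n)
      rw [hd] at h1
      simpa [hg] using h1
    have hrec : ∀ n : ℤ, stun pd w (n + 1)
        = A n (stun pd w n) + g n + centr pd w (n + 1) := by
      intro n
      have e1 := hzrec n
      have e2 := hz'rec n
      rw [hF] at e1 e2
      have hgn : g n = f n (y n + stun pd z n) - f n (y n + stun pd z' n) := by rw [hg]
      simp only [hsub, hcsub, hgn, map_sub]
      calc stun pd z (n+1) - stun pd z' (n+1)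
          = (y (n+1) + stun pd z (n+1)) - (y (n+1) + stun pd z' (n+1)) := by abel
        _ = (A n (y n + stun pd z n) + f n (y n + stun pd z n) + centr pd z (n+1))
            - (A n (y n + stun pd z' n) + f n (y n + stun pd z' n) + centr pd z' (n+1)) := by
            rw [e1, e2]
        _ = A n (stun pd z n) - A n (stun pd z' n)
            + (f n (y n + stun pd z n) - f n (y n + stun pd z' n))
            + (centr pd z (n+1) - centr pd z' (n+1)) := by
            simp only [map_add]
            abel
    have hcentr_eq : ∀ n : ℤ, centr pd w n = - pd.P3 n (g (n - 1)) := by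
      intro n
      have hm : n - 1 + 1 = n := by omega
      have hr := hrec (n - 1)
      rw [hm] at hr
      have happ := congrArg (pd.P3 n) hr
      have hA : pd.P3 n (A (n-1) (stun pd w (n-1))) = 0 := by
        have hcomm := DFunLike.congr_fun (pd.comm3 (n-1)) (stun pd w (n-1))
        rw [hm] at hcomm
        simp only [ContinuousLinearMap.comp_apply] at hcomm
        rw [← hcomm, hP3stun, map_zero]
      have hcc : pd.P3 n (centr pd w n) = centr pd w n := by
        simp [centr, hproj3]
      rw [map_add, map_add, hA, hP3stun, zero_add, hcc] at happ
      rw [eq_neg_iff_add_eq_zero, add_comm]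
      exact happ.symm
    have hstun_rel : ∀ n : ℤ, stun pd w n - A (n - 1) (stun pd w (n - 1)) = stun pd h n := by
      intro n
      have hm : n - 1 + 1 = n := by omega
      have hr := hrec (n - 1)
      rw [hm] at hr
      have hhn : stun pd h n = g (n - 1) - pd.P3 n (g (n - 1)) := by
        simp only [hh, stun]
      rw [hhn, hr, hcentr_eq]
      abel
    -- domination lemma
    have dom : ∀ (s : ℤ → X) (a : ℝ) (t : ℤ → ℝ), 0 ≤ a →
        B.toBanachSeqSpace.mem t → (∀ n, ‖s n‖ ≤ a * |t n|) →
        B.toBanachSeqSpace.mem (fun n => ‖s n‖) ∧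
          B.toBanachSeqSpace.N (fun n => ‖s n‖) ≤ a * B.toBanachSeqSpace.N t := by
      intro s a t ha ht hb
      have hmem := B.toBanachSeqSpace.smul_mem a t ht
      obtain ⟨h1, h2⟩ := B.toBanachSeqSpace.solid (fun n => ‖s n‖) (a • t) hmem (by
        intro n
        have he : |(a • t) n| = a * |t n| := by
          simp [abs_mul, abs_of_nonneg ha]
        rw [he]
        simpa using hb n)
      rw [B.toBanachSeqSpace.N_smul a t ht, abs_of_nonneg ha] at h2
      exact ⟨h1, h2⟩
    -- memberships and norm bounds
    have mw : B.toBanachSeqSpace.mem (fun n => ‖w n‖) := by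
      have hadd := B.toBanachSeqSpace.add_mem (fun n => ‖z n‖) (fun n => ‖z' n‖) mz mz'
      refine (dom w 1 ((fun n => ‖z n‖) + fun n => ‖z' n‖) zero_le_one hadd ?_).1
      intro n
      have h1 : ‖w n‖ ≤ ‖z n‖ + ‖z' n‖ := by
        rw [hw]; exact norm_sub_le _ _
      have hnn : (0:ℝ) ≤ ‖z n‖ + ‖z' n‖ := by positivity
      simpa [Pi.add_apply, abs_of_nonneg hnn] using h1
    have mstunw := dom (stun pd w) (2 * pd.D) (fun n => ‖w n‖) (by linarith) mw
      (fun n => by rw [abs_norm]; exact hstun_bd w n)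
    have mcentrw := dom (centr pd w) (1 + 2 * pd.D) (fun n => ‖w n‖)
      (by linarith) mw (fun n => by rw [abs_norm]; exact hcentr_bd w n)
    have msh : B.toBanachSeqSpace.mem (fun n : ℤ => ‖stun pd w (n - 1)‖) := by
      have h0 := B.shift_mem (fun n => ‖stun pd w n‖) (-1) mstunw.1
      have he : (fun n : ℤ => ‖stun pd w (n - 1)‖) = (fun n : ℤ => ‖stun pd w (n + -1)‖) := by
        funext n; rw [Int.sub_eq_add_neg]
      rw [he]
      exact h0
    have Nsh : B.toBanachSeqSpace.N (fun n : ℤ => ‖stun pd w (n - 1)‖)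
        = B.toBanachSeqSpace.N (fun n => ‖stun pd w n‖) := by
      have h0 := B.shift_isometry (fun n => ‖stun pd w n‖) (-1) mstunw.1
      have he : (fun n : ℤ => ‖stun pd w (n - 1)‖) = (fun n : ℤ => ‖stun pd w (n + -1)‖) := by
        funext n; rw [Int.sub_eq_add_neg]
      rw [he]
      exact h0
    have hhb : ∀ n : ℤ, ‖h n‖ ≤ c * ‖stun pd w (n - 1)‖ := by
      intro n
      simpa [hh] using hgb (n - 1)
    have mh := dom h c (fun n : ℤ => ‖stun pd w (n - 1)‖) hc msh (fun n => by
      rw [abs_norm]; exact hhb n)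
    have mch := dom (centr pd h) ((1 + 2 * pd.D) * c) (fun n : ℤ => ‖stun pd w (n - 1)‖)
      (mul_nonneg (by linarith) hc) msh (fun n => by
        rw [abs_norm]
        calc ‖centr pd h n‖ ≤ (1 + 2 * pd.D) * ‖h n‖ := hcentr_bd h n
          _ ≤ (1 + 2 * pd.D) * (c * ‖stun pd w (n - 1)‖) :=
              mul_le_mul_of_nonneg_left (hhb n) (by linarith)
          _ = (1 + 2 * pd.D) * c * ‖stun pd w (n - 1)‖ := (mul_assoc _ _ _).symm)
    have mshh := dom (stun pd h) (2 * pd.D * c) (fun n : ℤ => ‖stun pd w (n - 1)‖)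
      (mul_nonneg (by linarith) hc) msh (fun n => by
        rw [abs_norm]
        calc ‖stun pd h n‖ ≤ 2 * pd.D * ‖h n‖ := hstun_bd h n
          _ ≤ 2 * pd.D * (c * ‖stun pd w (n - 1)‖) :=
              mul_le_mul_of_nonneg_left (hhb n) (by linarith)
          _ = 2 * pd.D * c * ‖stun pd w (n - 1)‖ := (mul_assoc _ _ _).symm)
    have msuw : memXBsu B.toBanachSeqSpace pd (stun pd w) :=
      ⟨mstunw.1, fun n => hstun_decomp w n⟩
    have msuh : memXBsu B.toBanachSeqSpace pd (stun pd h) :=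
      ⟨mshh.1, fun n => hstun_decomp h n⟩
    have hAfix : 𝔸 (stun pd h) = stun pd w :=
      (h𝔸char (stun pd w) (stun pd h) msuw msuh).mpr hstun_rel
    have hGh : G h = w := by
      funext n
      rw [hG h]
      simp only [Pi.add_apply, Pi.neg_apply]
      rw [hAfix]
      have h1 : centr pd h n = pd.P3 n (g (n - 1)) := by
        simp only [centr, hh]
      rw [h1, ← hcentr_eq n]
      simp only [centr, stun]
      abel
    -- the contraction estimate
    have hNw_nonneg : 0 ≤ Nadapt B.toBanachSeqSpace pd w := by
      have h1 : (0:ℝ) ≤ NXB B.toBanachSeqSpace (centr pd w) :=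
        B.toBanachSeqSpace.N_nonneg _
      exact le_trans h1 (le_max_left _ _)
    have hNstun_nonneg : 0 ≤ NXB B.toBanachSeqSpace (stun pd w) :=
      B.toBanachSeqSpace.N_nonneg _
    have s1 : Nadapt B.toBanachSeqSpace pd w ≤ normG * Nadapt B.toBanachSeqSpace pd h := by
      rw [← hGh]
      exact hnormG h mh.1
    have s2 : Nadapt B.toBanachSeqSpace pd h ≤
        (1 + 2 * pd.D) * c * NXB B.toBanachSeqSpace (stun pd w) := by
      unfold Nadapt
      apply max_le
      · calc NXB B.toBanachSeqSpace (centr pd h)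
            ≤ (1 + 2*pd.D) * c * B.toBanachSeqSpace.N (fun n : ℤ => ‖stun pd w (n - 1)‖) :=
              mch.2
          _ = (1 + 2*pd.D) * c * NXB B.toBanachSeqSpace (stun pd w) := by
              rw [Nsh]; rfl
      · calc NXB B.toBanachSeqSpace (stun pd h)
            ≤ 2*pd.D * c * B.toBanachSeqSpace.N (fun n : ℤ => ‖stun pd w (n - 1)‖) := mshh.2
          _ = 2*pd.D * c * NXB B.toBanachSeqSpace (stun pd w) := by rw [Nsh]; rfl
          _ ≤ (1 + 2*pd.D) * c * NXB B.toBanachSeqSpace (stun pd w) :=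
              mul_le_mul_of_nonneg_right
                (mul_le_mul_of_nonneg_right (by linarith) hc) hNstun_nonneg
    have s3 : NXB B.toBanachSeqSpace (stun pd w) ≤ Nadapt B.toBanachSeqSpace pd w :=
      le_max_right _ _
    have hkey : Nadapt B.toBanachSeqSpace pd w ≤
        normG * ((1 + 2 * pd.D) * c * Nadapt B.toBanachSeqSpace pd w) := by
      calc Nadapt B.toBanachSeqSpace pd w
          ≤ normG * Nadapt B.toBanachSeqSpace pd h := s1
        _ ≤ normG * ((1 + 2 * pd.D) * c * NXB B.toBanachSeqSpace (stun pd w)) :=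
            mul_le_mul_of_nonneg_left s2 hnormG0.le
        _ ≤ normG * ((1 + 2 * pd.D) * c * Nadapt B.toBanachSeqSpace pd w) := by
            exact mul_le_mul_of_nonneg_left
              (mul_le_mul_of_nonneg_left s3 (mul_nonneg (by linarith) hc)) hnormG0.le
    have hq : (0:ℝ) ≤ c * (1 + 2*pd.D) * normG :=
      mul_nonneg (mul_nonneg hc (by linarith)) hnormG0.le
    have hp : (0:ℝ) ≤ c * (1 + 2*pd.D) * normG * (4*pd.D - 1) :=
      mul_nonneg hq (by linarith)
    have hk : normG * ((1 + 2 * pd.D) * c) < 1 := by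
      clear_value w g h
      clear * - hp hsmall
      nlinarith [hp, hsmall]
    have hN0 : Nadapt B.toBanachSeqSpace pd w = 0 := by
      refine le_antisymm ?_ hNw_nonneg
      clear_value w g h
      clear * - hkey hk hNw_nonneg
      nlinarith [hkey, hk, hNw_nonneg]
    have hcen0 : ∀ n : ℤ, centr pd w n = 0 := by
      have hle : B.toBanachSeqSpace.N (fun n => ‖centr pd w n‖) = 0 := by
        refine le_antisymm ?_ (B.toBanachSeqSpace.N_nonneg _)
        calc B.toBanachSeqSpace.N (fun n => ‖centr pd w n‖)
            ≤ Nadapt B.toBanachSeqSpace pd w := le_max_left _ _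
          _ = 0 := hN0
      have h0 := B.toBanachSeqSpace.N_eq_zero _ mcentrw.1 hle
      intro n
      have h2 := congrFun h0 n
      simpa using h2
    have hstu0 : ∀ n : ℤ, stun pd w n = 0 := by
      have hle : B.toBanachSeqSpace.N (fun n => ‖stun pd w n‖) = 0 := by
        refine le_antisymm ?_ (B.toBanachSeqSpace.N_nonneg _)
        calc B.toBanachSeqSpace.N (fun n => ‖stun pd w n‖)
            ≤ Nadapt B.toBanachSeqSpace pd w := le_max_right _ _
          _ = 0 := hN0
      have h0 := B.toBanachSeqSpace.N_eq_zero _ mstunw.1 hle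
      intro n
      have h2 := congrFun h0 n
      simpa using h2
    funext n
    have hw0 : w n = 0 := by
      have hdec : w n = centr pd w n + stun pd w n := by
        simp only [centr, stun]
        abel
      rw [hdec, hcen0 n, hstu0 n, add_zero]
    have hz0 : z n - z' n = 0 := by
      simpa [hw] using hw0
    exact sub_eq_zero.mp hz0
end

section
/- Let (A_m)_{m∈ℤ} be invertible operators with sup_m{‖A_m‖, ‖A_m^{-1}‖} < ∞ admitting a strong partial exponential dichotomy, and let F_n = A_n + f_n with f_n c-Lipschitz, c sufficiently small, and ‖f_n‖_sup ≤ δ = Lε. Then there exist continuous maps h_m : X → X and τ_m : X → E_m^c such that for each m: h_{m+1} ∘ F_m = A_m ∘ h_m + τ_{m+1} ∘ F_m, ‖h_m − Id‖_sup ≤ ε, ‖τ_m‖_sup ≤ ε, and h_m(x) − x ∈ E_m^{s,u} for all x ∈ X. -/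
variable {X : Type*} [NormedAddCommGroup X] [NormedSpace ℝ X]

/-- A strong partial exponential dichotomy for a sequence of bounded invertible linear
operators `(A_m)_{m∈ℤ}`: projections `P¹, P², P³` summing to the identity, commuting
with the dynamics, a two-sided cocycle `𝒜`, and constants `D > 0`, `0 ≤ a < b`,
`0 ≤ c < d` with the four exponential bounds. -/
structure StrongPartialDichotomy (A : ℤ → X →L[ℝ] X) where
  Ainv : ℤ → X →L[ℝ] X
  left_inv : ∀ n, (Ainv n).comp (A n) = ContinuousLinearMap.id ℝ X
  right_inv : ∀ n, (A n).comp (Ainv n) = ContinuousLinearMap.id ℝ X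
  P1 : ℤ → X →L[ℝ] X
  P2 : ℤ → X →L[ℝ] X
  P3 : ℤ → X →L[ℝ] X
  D : ℝ
  a : ℝ
  b : ℝ
  c : ℝ
  d : ℝ
  hD : 0 < D
  ha : 0 ≤ a
  hab : a < b
  hc : 0 ≤ c
  hcd : c < d
  proj1 : ∀ n, (P1 n).comp (P1 n) = P1 n
  proj2 : ∀ n, (P2 n).comp (P2 n) = P2 n
  proj3 : ∀ n, (P3 n).comp (P3 n) = P3 n
  sum_eq : ∀ n (x : X), P1 n x + P2 n x + P3 n x = x
  comm1 : ∀ n, (A n).comp (P1 n) = (P1 (n + 1)).comp (A n)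
  comm2 : ∀ n, (A n).comp (P2 n) = (P2 (n + 1)).comp (A n)
  comm3 : ∀ n, (A n).comp (P3 n) = (P3 (n + 1)).comp (A n)
  /-- the two-sided cocycle `𝒜(m,n)` -/
  coc : ℤ → ℤ → X →L[ℝ] X
  coc_self : ∀ n, coc n n = ContinuousLinearMap.id ℝ X
  coc_step : ∀ m n, coc (m + 1) n = (A m).comp (coc m n)
  coc_comp : ∀ k m n : ℤ, (coc n m).comp (coc m k) = coc n k
  /-- `‖𝒜(m,n)P_n¹‖ ≤ D e^{-d(m-n)}` for `m ≥ n` -/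
  bound1 : ∀ m n : ℤ, n ≤ m → ‖(coc m n).comp (P1 n)‖ ≤ D * Real.exp (-d * ((m - n : ℤ) : ℝ))
  /-- `‖𝒜(m,n)P_n²‖ ≤ D e^{-b(n-m)}` for `m ≤ n` -/
  bound2 : ∀ m n : ℤ, m ≤ n → ‖(coc m n).comp (P2 n)‖ ≤ D * Real.exp (-b * ((n - m : ℤ) : ℝ))
  /-- `‖𝒜(m,n)P_n³‖ ≤ D e^{a(m-n)}` for `m ≥ n` -/
  bound3f : ∀ m n : ℤ, n ≤ m → ‖(coc m n).comp (P3 n)‖ ≤ D * Real.exp (a * ((m - n : ℤ) : ℝ))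
  /-- `‖𝒜(m,n)P_n³‖ ≤ D e^{c(n-m)}` for `m ≤ n` -/
  bound3b : ∀ m n : ℤ, m ≤ n → ‖(coc m n).comp (P3 n)‖ ≤ D * Real.exp (c * ((n - m : ℤ) : ℝ))

/-! Along an orbit `x_{j+1} = F_j x_j`, put `u_j = h_j(x_j) - x_j` and
`τ_{j+1}(x_{j+1}) = P³_{j+1} f_j(x_j)`. The conjugacy equation then becomes the linear equation
`u_{j+1} = A_j u_j - (P¹_{j+1} + P²_{j+1}) f_j(x_j)`, whose forcing has no central component, so
the dichotomy solves it by Green sums: the stable component sums the forcing over the past, the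
unstable one over the future, with geometric weights `D e^{-dk}` and `D e^{-bk}`. These sums are
bounded by a constant times `sup ‖f‖`, lie in `E^{s,u}`, and depend continuously on `x`. Orbits
exist for all times because a small Lipschitz perturbation of an invertible operator is a
homeomorphism. -/

theorem IsIdempotentElem.mul_eq_zero_of_add_add_eq_one {R : Type*} [Ring R] [IsAddTorsionFree R]
    {e f g : R} (he : IsIdempotentElem e) (hf : IsIdempotentElem f) (hg : IsIdempotentElem g)
    (h : e + f + g = 1) : g * e = 0 := by
  have hge : IsIdempotentElem (g + e) := by
    rw [show g + e = 1 - f by rw [← h]; abel]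
    exact hf.one_sub
  exact hg.mul_eq_zero_of_anticommute ((hg.add_iff he).mp hge)

theorem ContinuousLinearEquiv.exists_homeomorph_add_of_lipschitzWith
    {𝕜 E F : Type*} [NontriviallyNormedField 𝕜] [NormedAddCommGroup E] [NormedSpace 𝕜 E]
    [NormedAddCommGroup F] [NormedSpace 𝕜 F] [CompleteSpace E]
    (A : E ≃L[𝕜] F) {f : E → F} {c : NNReal} (hf : LipschitzWith c f)
    (hc : c * ‖(A.symm : F →L[𝕜] E)‖₊ < 1) : ∃ Φ : E ≃ₜ F, ∀ x, Φ x = A x + f x := by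
  have happrox : ApproximatesLinearOn (fun x => A x + f x) (A : E →L[𝕜] F) Set.univ c := by
    intro x _ y _
    simpa [map_sub, add_sub_add_comm, ← dist_eq_norm] using hf.dist_le_mul x y
  have hc' : Subsingleton E ∨ c < ‖(A.symm : F →L[𝕜] E)‖₊⁻¹ := by
    rcases subsingleton_or_nontrivial E with hE | hE
    · exact Or.inl hE
    · exact Or.inr ((NNReal.lt_inv_iff_mul_lt A.nnnorm_symm_pos.ne').mpr hc)
  exact ⟨happrox.toHomeomorph _ hc', fun _ => rfl⟩

section ZSeqCocycle

variable {G : Type*} [Group G]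

/-- `zSeqProd g n = g (n - 1) * ⋯ * g 0` for `n ≥ 0` and `(g n)⁻¹ * ⋯ * (g (-1))⁻¹` for `n < 0`. -/
def zSeqProd (g : ℤ → G) (n : ℤ) : G :=
  Int.inductionOn' n 0 1 (fun k _ p => g k * p) (fun k _ p => (g (k - 1))⁻¹ * p)

theorem zSeqProd_add_one (g : ℤ → G) (n : ℤ) : zSeqProd g (n + 1) = g n * zSeqProd g n := by
  rcases le_or_gt 0 n with hn | hn
  · exact Int.inductionOn'_add_one hn
  · have h := Int.inductionOn'_sub_one (motive := fun _ => G) (z := n + 1) (b := 0) (zero := 1)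
      (succ := fun k _ p => g k * p) (pred := fun k _ p => (g (k - 1))⁻¹ * p) (by omega)
    simp only [add_sub_cancel_right] at h
    simp only [zSeqProd, h, mul_inv_cancel_left]

def zSeqCocycle (g : ℤ → G) (n m : ℤ) : G := zSeqProd g n * (zSeqProd g m)⁻¹

@[simp]
theorem zSeqCocycle_self (g : ℤ → G) (m : ℤ) : zSeqCocycle g m m = 1 :=
  mul_inv_cancel _

theorem zSeqCocycle_add_one_right_mul (g : ℤ → G) (n m : ℤ) :
    zSeqCocycle g n (m + 1) * g m = zSeqCocycle g n m := by
  simp [zSeqCocycle, zSeqProd_add_one, mul_assoc]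

end ZSeqCocycle

section Orbit

variable {Y Z : Type*} [TopologicalSpace Y]

/-- `zSeqCocycle G j m x` is the point at time `j` of the orbit of `G` through `x` at time `m`. -/
def perturbationAlongOrbit (G : ℤ → Y ≃ₜ Y) (f : ℤ → Y → Z) (m : ℤ) (x : Y) (j : ℤ) : Z :=
  f j (zSeqCocycle G j m x)

theorem perturbationAlongOrbit_apply_add_one (G : ℤ → Y ≃ₜ Y) (f : ℤ → Y → Z) (m : ℤ) (x : Y) :
    perturbationAlongOrbit G f (m + 1) (G m x) = perturbationAlongOrbit G f m x := by
  ext j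
  rw [perturbationAlongOrbit, perturbationAlongOrbit, ← zSeqCocycle_add_one_right_mul G j m,
    Homeomorph.mul_apply]

theorem perturbationAlongOrbit_self (G : ℤ → Y ≃ₜ Y) (f : ℤ → Y → Z) (m : ℤ) (x : Y) :
    perturbationAlongOrbit G f m x m = f m x := by
  simp [perturbationAlongOrbit]

theorem continuous_perturbationAlongOrbit [TopologicalSpace Z] {G : ℤ → Y ≃ₜ Y} {f : ℤ → Y → Z}
    (hf : ∀ n, Continuous (f n)) (m j : ℤ) :
    Continuous fun x => perturbationAlongOrbit G f m x j :=
  (hf j).comp (zSeqCocycle G j m).continuous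

end Orbit

namespace StrongPartialDichotomy

open ContinuousLinearMap

variable {A : ℤ → X →L[ℝ] X} (spd : StrongPartialDichotomy A)

theorem coc_coc_apply (k m n : ℤ) (x : X) : spd.coc n m (spd.coc m k x) = spd.coc n k x :=
  congr($(spd.coc_comp k m n) x)

theorem coc_succ_apply (m n : ℤ) (x : X) : spd.coc (m + 1) n x = A m (spd.coc m n x) :=
  congr($(spd.coc_step m n) x)

theorem coc_self_apply (n : ℤ) (x : X) : spd.coc n n x = x :=
  congr($(spd.coc_self n) x)

theorem coc_comp_of_commute_of_le {Q : ℤ → X →L[ℝ] X}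
    (hQ : ∀ n, (A n).comp (Q n) = (Q (n + 1)).comp (A n)) {m n : ℤ} (hnm : n ≤ m) :
    (spd.coc m n).comp (Q n) = (Q m).comp (spd.coc m n) := by
  induction m, hnm using Int.leInduction with
  | base => simp [spd.coc_self]
  | succ m _ ih => rw [spd.coc_step, comp_assoc, ih, ← comp_assoc, hQ, comp_assoc]

theorem coc_comp_of_commute {Q : ℤ → X →L[ℝ] X}
    (hQ : ∀ n, (A n).comp (Q n) = (Q (n + 1)).comp (A n)) (m n : ℤ) :
    (spd.coc m n).comp (Q n) = (Q m).comp (spd.coc m n) := by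
  rcases le_total n m with hnm | hmn
  · exact spd.coc_comp_of_commute_of_le hQ hnm
  · ext x
    have h := congr($(spd.coc_comp_of_commute_of_le hQ hmn) (spd.coc m n x))
    simp only [comp_apply, coc_coc_apply, coc_self_apply] at h ⊢
    rw [← h, coc_coc_apply, coc_self_apply]

theorem P1_add_P2_add_P3 (n : ℤ) : spd.P1 n + spd.P2 n + spd.P3 n = 1 := by
  ext x; exact spd.sum_eq n x

theorem P3_comp_P1 (n : ℤ) : (spd.P3 n).comp (spd.P1 n) = 0 :=
  haveI := IsAddTorsionFree.of_isTorsionFree ℝ (X →L[ℝ] X)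
  IsIdempotentElem.mul_eq_zero_of_add_add_eq_one (spd.proj1 n) (spd.proj2 n) (spd.proj3 n)
    (spd.P1_add_P2_add_P3 n)

theorem P3_comp_P2 (n : ℤ) : (spd.P3 n).comp (spd.P2 n) = 0 :=
  haveI := IsAddTorsionFree.of_isTorsionFree ℝ (X →L[ℝ] X)
  IsIdempotentElem.mul_eq_zero_of_add_add_eq_one (spd.proj2 n) (spd.proj1 n) (spd.proj3 n)
    (by rw [add_comm (spd.P2 n), spd.P1_add_P2_add_P3 n])

theorem norm_P3_le (n : ℤ) : ‖spd.P3 n‖ ≤ spd.D := by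
  simpa [spd.coc_self] using spd.bound3f n n le_rfl

theorem P3_coc_P1 (m n : ℤ) (v : X) : spd.P3 m (spd.coc m n (spd.P1 n v)) = 0 := by
  rw [← comp_apply (spd.P3 m), ← spd.coc_comp_of_commute spd.comm3, comp_apply,
    ← comp_apply (spd.P3 n), P3_comp_P1, zero_apply, map_zero]

theorem P3_coc_P2 (m n : ℤ) (v : X) : spd.P3 m (spd.coc m n (spd.P2 n v)) = 0 := by
  rw [← comp_apply (spd.P3 m), ← spd.coc_comp_of_commute spd.comm3, comp_apply,
    ← comp_apply (spd.P3 n), P3_comp_P2, zero_apply, map_zero]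

theorem exp_neg_d_lt_one : Real.exp (-spd.d) < 1 :=
  Real.exp_lt_one_iff.mpr (by linarith [spd.hc, spd.hcd])

theorem exp_neg_b_lt_one : Real.exp (-spd.b) < 1 :=
  Real.exp_lt_one_iff.mpr (by linarith [spd.ha, spd.hab])

theorem norm_coc_P1_le (m : ℤ) (k : ℕ) (v : X) :
    ‖spd.coc m (m - k) (spd.P1 (m - k) v)‖ ≤ spd.D * Real.exp (-spd.d) ^ k * ‖v‖ := by
  have h := spd.bound1 m (m - k) (by omega)
  rw [show ((m - (m - k) : ℤ) : ℝ) = k by push_cast; ring, mul_comm (-spd.d),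
    Real.exp_nat_mul] at h
  exact ((spd.coc m (m - k)).comp (spd.P1 (m - k))).le_of_opNorm_le h v

theorem norm_coc_P2_le (m : ℤ) (k : ℕ) (v : X) :
    ‖spd.coc m (m + k + 1) (spd.P2 (m + k + 1) v)‖ ≤ spd.D * Real.exp (-spd.b) ^ k * ‖v‖ := by
  have h := spd.bound2 m (m + k + 1) (by omega)
  rw [show ((m + k + 1 - m : ℤ) : ℝ) = (k + 1 : ℕ) by push_cast; ring, mul_comm (-spd.b),
    Real.exp_nat_mul, pow_succ] at h
  have hle : Real.exp (-spd.b) ^ k * Real.exp (-spd.b) ≤ Real.exp (-spd.b) ^ k :=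
    mul_le_of_le_one_right (by positivity) spd.exp_neg_b_lt_one.le
  exact ((spd.coc m (m + k + 1)).comp (spd.P2 (m + k + 1))).le_of_opNorm_le
    (h.trans (mul_le_mul_of_nonneg_left hle spd.hD.le)) v

/-- `stableSum w - unstableSum w` is the bounded solution of
`u_{m+1} = A_m u_m + (P¹_{m+1} + P²_{m+1}) w_m` given by the Green function of the dichotomy:
the stable part sums over the past, the unstable part over the future. -/
noncomputable def stableSum (w : ℤ → X) (m : ℤ) : X :=
  ∑' k : ℕ, spd.coc m (m - k) (spd.P1 (m - k) (w (m - 1 - k)))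

noncomputable def unstableSum (w : ℤ → X) (m : ℤ) : X :=
  ∑' k : ℕ, spd.coc m (m + k + 1) (spd.P2 (m + k + 1) (w (m + k)))

noncomputable def greenBound : ℝ :=
  spd.D * (1 - Real.exp (-spd.d))⁻¹ + spd.D * (1 - Real.exp (-spd.b))⁻¹

theorem D_le_greenBound : spd.D ≤ spd.greenBound := by
  have hd : 0 < 1 - Real.exp (-spd.d) := sub_pos.mpr spd.exp_neg_d_lt_one
  have hb : 0 < 1 - Real.exp (-spd.b) := sub_pos.mpr spd.exp_neg_b_lt_one
  have h1 : 1 ≤ (1 - Real.exp (-spd.d))⁻¹ :=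
    (one_le_inv₀ hd).mpr (by linarith [Real.exp_pos (-spd.d)])
  calc spd.D ≤ spd.D * (1 - Real.exp (-spd.d))⁻¹ := le_mul_of_one_le_right spd.hD.le h1
    _ ≤ spd.greenBound :=
        le_add_of_nonneg_right (mul_nonneg spd.hD.le (inv_nonneg.mpr hb.le))

theorem greenBound_pos : 0 < spd.greenBound :=
  spd.hD.trans_le spd.D_le_greenBound

section Bounded

variable {w : ℤ → X} {δ : ℝ} (hw : ∀ j, ‖w j‖ ≤ δ)
include hw

theorem norm_stableSum_term_le (m : ℤ) (k : ℕ) :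
    ‖spd.coc m (m - k) (spd.P1 (m - k) (w (m - 1 - k)))‖ ≤ spd.D * δ * Real.exp (-spd.d) ^ k :=
  (spd.norm_coc_P1_le m k _).trans <|
    (mul_le_mul_of_nonneg_left (hw _) (by have := spd.hD; positivity)).trans_eq (by ring)

theorem norm_unstableSum_term_le (m : ℤ) (k : ℕ) :
    ‖spd.coc m (m + k + 1) (spd.P2 (m + k + 1) (w (m + k)))‖ ≤
      spd.D * δ * Real.exp (-spd.b) ^ k :=
  (spd.norm_coc_P2_le m k _).trans <|
    (mul_le_mul_of_nonneg_left (hw _) (by have := spd.hD; positivity)).trans_eq (by ring)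

theorem norm_stableSum_le (m : ℤ) :
    ‖spd.stableSum w m‖ ≤ spd.D * δ * (1 - Real.exp (-spd.d))⁻¹ :=
  tsum_of_norm_bounded
    ((hasSum_geometric_of_lt_one (by positivity) spd.exp_neg_d_lt_one).mul_left _)
    (spd.norm_stableSum_term_le hw m)

theorem norm_unstableSum_le (m : ℤ) :
    ‖spd.unstableSum w m‖ ≤ spd.D * δ * (1 - Real.exp (-spd.b))⁻¹ :=
  tsum_of_norm_bounded
    ((hasSum_geometric_of_lt_one (by positivity) spd.exp_neg_b_lt_one).mul_left _)
    (spd.norm_unstableSum_term_le hw m)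

variable [CompleteSpace X]

theorem summable_stableSum (m : ℤ) :
    Summable fun k : ℕ => spd.coc m (m - k) (spd.P1 (m - k) (w (m - 1 - k))) :=
  .of_norm_bounded
    ((summable_geometric_of_lt_one (by positivity) spd.exp_neg_d_lt_one).mul_left _)
    (spd.norm_stableSum_term_le hw m)

theorem summable_unstableSum (m : ℤ) :
    Summable fun k : ℕ => spd.coc m (m + k + 1) (spd.P2 (m + k + 1) (w (m + k))) :=
  .of_norm_bounded
    ((summable_geometric_of_lt_one (by positivity) spd.exp_neg_b_lt_one).mul_left _)
    (spd.norm_unstableSum_term_le hw m)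

theorem stableSum_add_one (m : ℤ) :
    spd.stableSum w (m + 1) = spd.P1 (m + 1) (w m) + A m (spd.stableSum w m) := by
  rw [stableSum, (spd.summable_stableSum hw (m + 1)).tsum_eq_zero_add, stableSum,
    (A m).map_tsum (spd.summable_stableSum hw m)]
  congr 1
  · simp [coc_self_apply]
  · refine tsum_congr fun k => ?_
    rw [show m + 1 - ((k + 1 : ℕ) : ℤ) = m - k by push_cast; ring,
      show m + 1 - 1 - ((k + 1 : ℕ) : ℤ) = m - 1 - k by push_cast; ring, coc_succ_apply]

theorem apply_unstableSum (m : ℤ) :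
    A m (spd.unstableSum w m) = spd.P2 (m + 1) (w m) + spd.unstableSum w (m + 1) := by
  rw [unstableSum, (A m).map_tsum (spd.summable_unstableSum hw m),
    ((spd.summable_unstableSum hw m).mapL (A m)).tsum_eq_zero_add, unstableSum]
  congr 1
  · simp [← coc_succ_apply, coc_self_apply]
  · refine tsum_congr fun k => ?_
    rw [show m + ((k + 1 : ℕ) : ℤ) + 1 = m + 1 + k + 1 by push_cast; ring,
      show m + ((k + 1 : ℕ) : ℤ) = m + 1 + k by push_cast; ring, coc_succ_apply]

theorem P3_stableSum (m : ℤ) : spd.P3 m (spd.stableSum w m) = 0 := by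
  simp [stableSum, (spd.P3 m).map_tsum (spd.summable_stableSum hw m), P3_coc_P1]

theorem P3_unstableSum (m : ℤ) : spd.P3 m (spd.unstableSum w m) = 0 := by
  simp [unstableSum, (spd.P3 m).map_tsum (spd.summable_unstableSum hw m), P3_coc_P2]

end Bounded

variable (G : ℤ → X ≃ₜ X) (f : ℤ → X → X)

theorem exists_homeomorph_eq_add [CompleteSpace X] {M : ℝ} (hM : ∀ n, ‖spd.Ainv n‖ ≤ M)
    {f : ℤ → X → X} {c : NNReal} (hf : ∀ n, LipschitzWith c (f n)) (hcM : c * M < 1) :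
    ∃ G : ℤ → X ≃ₜ X, ∀ n x, G n x = A n x + f n x := by
  have hG : ∀ n, ∃ Φ : X ≃ₜ X, ∀ x, Φ x = A n x + f n x := fun n =>
    (ContinuousLinearEquiv.equivOfInverse' (A n) (spd.Ainv n) (spd.right_inv n)
      (spd.left_inv n)).exists_homeomorph_add_of_lipschitzWith (hf n)
      (by rw [← NNReal.coe_lt_coe]; push_cast
          exact (mul_le_mul_of_nonneg_left (hM n) c.2).trans_lt hcM)
  choose G hG using hG
  exact ⟨G, hG⟩

noncomputable def conjugacy (m : ℤ) (x : X) : X :=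
  x + spd.unstableSum (perturbationAlongOrbit G f m x) m -
    spd.stableSum (perturbationAlongOrbit G f m x) m

noncomputable def centralCorrection (m : ℤ) (x : X) : X :=
  spd.P3 m (perturbationAlongOrbit G f m x (m - 1))

variable {G f} {δ : ℝ}

theorem P3_centralCorrection (m : ℤ) (x : X) :
    spd.P3 m (spd.centralCorrection G f m x) = spd.centralCorrection G f m x :=
  congr($(spd.proj3 m) _)

theorem norm_centralCorrection_le (hδ : ∀ n x, ‖f n x‖ ≤ δ) (m : ℤ) (x : X) :
    ‖spd.centralCorrection G f m x‖ ≤ spd.D * δ :=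
  (spd.P3 m).le_of_opNorm_le_of_le (spd.norm_P3_le m) (hδ _ _)

theorem norm_conjugacy_sub_le (hδ : ∀ n x, ‖f n x‖ ≤ δ) (m : ℤ) (x : X) :
    ‖spd.conjugacy G f m x - x‖ ≤ spd.greenBound * δ := by
  have hw : ∀ j, ‖perturbationAlongOrbit G f m x j‖ ≤ δ := fun _ => hδ _ _
  calc ‖spd.conjugacy G f m x - x‖
      = ‖spd.unstableSum (perturbationAlongOrbit G f m x) m -
          spd.stableSum (perturbationAlongOrbit G f m x) m‖ := by
        rw [conjugacy, add_sub_assoc, add_sub_cancel_left]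
    _ ≤ spd.D * δ * (1 - Real.exp (-spd.b))⁻¹ + spd.D * δ * (1 - Real.exp (-spd.d))⁻¹ :=
        (norm_sub_le _ _).trans (add_le_add (spd.norm_unstableSum_le hw m)
          (spd.norm_stableSum_le hw m))
    _ = spd.greenBound * δ := by rw [greenBound]; ring

theorem continuous_centralCorrection (hf : ∀ n, Continuous (f n)) (m : ℤ) :
    Continuous (spd.centralCorrection G f m) :=
  (spd.P3 m).continuous.comp (continuous_perturbationAlongOrbit hf m (m - 1))

variable [CompleteSpace X]

theorem continuous_stableSum {Y : Type*} [TopologicalSpace Y] {w : Y → ℤ → X} {δ : ℝ}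
    (hw : ∀ y j, ‖w y j‖ ≤ δ) (hc : ∀ j, Continuous fun y => w y j) (m : ℤ) :
    Continuous fun y => spd.stableSum (w y) m :=
  continuous_tsum (fun _ => (spd.coc _ _).continuous.comp ((spd.P1 _).continuous.comp (hc _)))
    ((summable_geometric_of_lt_one (by positivity) spd.exp_neg_d_lt_one).mul_left _)
    fun k y => spd.norm_stableSum_term_le (hw y) m k

theorem continuous_unstableSum {Y : Type*} [TopologicalSpace Y] {w : Y → ℤ → X} {δ : ℝ}
    (hw : ∀ y j, ‖w y j‖ ≤ δ) (hc : ∀ j, Continuous fun y => w y j) (m : ℤ) :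
    Continuous fun y => spd.unstableSum (w y) m :=
  continuous_tsum (fun _ => (spd.coc _ _).continuous.comp ((spd.P2 _).continuous.comp (hc _)))
    ((summable_geometric_of_lt_one (by positivity) spd.exp_neg_b_lt_one).mul_left _)
    fun k y => spd.norm_unstableSum_term_le (hw y) m k

theorem continuous_conjugacy (hf : ∀ n, Continuous (f n)) (hδ : ∀ n x, ‖f n x‖ ≤ δ) (m : ℤ) :
    Continuous (spd.conjugacy G f m) :=
  (continuous_id.add (spd.continuous_unstableSum (fun _ _ => hδ _ _)
    (continuous_perturbationAlongOrbit hf m) m)).sub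
    (spd.continuous_stableSum (fun _ _ => hδ _ _) (continuous_perturbationAlongOrbit hf m) m)

theorem P3_conjugacy_sub (hδ : ∀ n x, ‖f n x‖ ≤ δ) (m : ℤ) (x : X) :
    spd.P3 m (spd.conjugacy G f m x - x) = 0 := by
  have hw : ∀ j, ‖perturbationAlongOrbit G f m x j‖ ≤ δ := fun _ => hδ _ _
  rw [conjugacy, add_sub_assoc, add_sub_cancel_left, map_sub, spd.P3_unstableSum hw,
    spd.P3_stableSum hw, sub_zero]

theorem conjugacy_apply_add_one (hG : ∀ n x, G n x = A n x + f n x)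
    (hδ : ∀ n x, ‖f n x‖ ≤ δ) (m : ℤ) (x : X) :
    spd.conjugacy G f (m + 1) (G m x) =
      A m (spd.conjugacy G f m x) + spd.centralCorrection G f (m + 1) (G m x) := by
  have hw : ∀ j, ‖perturbationAlongOrbit G f m x j‖ ≤ δ := fun _ => hδ _ _
  have hU := spd.apply_unstableSum hw m
  simp only [conjugacy, centralCorrection, perturbationAlongOrbit_apply_add_one,
    add_sub_cancel_right, spd.stableSum_add_one hw, perturbationAlongOrbit_self] at hU ⊢
  rw [hG, map_sub, map_add, hU]
  nth_rewrite 1 [← spd.sum_eq (m + 1) (f m x)]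
  abel

end StrongPartialDichotomy

theorem quasi_stability
    {X : Type*} [NormedAddCommGroup X] [NormedSpace ℝ X] [CompleteSpace X]
    (A : ℤ → X →L[ℝ] X) (spd : StrongPartialDichotomy A)
    (M : ℝ) (hM : ∀ m : ℤ, ‖A m‖ ≤ M ∧ ‖spd.Ainv m‖ ≤ M) :
    ∃ c₀ > (0 : ℝ), ∃ L > (0 : ℝ), ∃ ε₀ > (0 : ℝ),
      ∀ ε : ℝ, 0 < ε → ε ≤ ε₀ →
      ∀ (c : ℝ), 0 < c → c ≤ c₀ →
      ∀ f : ℤ → X → X,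
        (∀ (n : ℤ) (x y : X), ‖f n x - f n y‖ ≤ c * ‖x - y‖) →
        (∀ (n : ℤ) (x : X), ‖f n x‖ ≤ L * ε) →
      ∀ F : ℤ → X → X, (∀ (n : ℤ) (x : X), F n x = A n x + f n x) →
      ∃ h τ : ℤ → X → X,
        (∀ m : ℤ, Continuous (h m)) ∧
        (∀ m : ℤ, Continuous (τ m)) ∧
        -- τ_m takes values in the central direction E_m^c
        (∀ (m : ℤ) (x : X), spd.P3 m (τ m x) = τ m x) ∧
        -- the conjugacy equation up to central movement
        (∀ (m : ℤ) (x : X), h (m + 1) (F m x) = A m (h m x) + τ (m + 1) (F m x)) ∧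
        (∀ (m : ℤ) (x : X), ‖h m x - x‖ ≤ ε) ∧
        (∀ (m : ℤ) (x : X), ‖τ m x‖ ≤ ε) ∧
        -- h_m(x) − x ∈ E_m^{s,u}
        (∀ (m : ℤ) (x : X), spd.P3 m (h m x - x) = 0) := by
  have hM0 : 0 ≤ M := (norm_nonneg _).trans (hM 0).1
  have hK := spd.greenBound_pos
  refine ⟨(M + 1)⁻¹, by positivity, spd.greenBound⁻¹, by positivity, 1, one_pos, ?_⟩
  intro ε _ _ c hc hcc₀ f hlip hδ F hF
  have hf : ∀ n, LipschitzWith c.toNNReal (f n) := fun n =>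
    .of_dist_le_mul fun x y => by
      simpa only [dist_eq_norm, Real.coe_toNNReal c hc.le] using hlip n x y
  have hcM : (c.toNNReal : ℝ) * M < 1 := by
    rw [Real.coe_toNNReal c hc.le]
    calc c * M < c * (M + 1) := by nlinarith
      _ ≤ (M + 1)⁻¹ * (M + 1) := by gcongr
      _ = 1 := inv_mul_cancel₀ (by positivity)
  obtain ⟨G, hG⟩ := spd.exists_homeomorph_eq_add (fun n => (hM n).2) hf hcM
  obtain rfl : F = fun n => ⇑(G n) := funext fun n => funext fun x => (hF n x).trans (hG n x).symm
  have hfc : ∀ n, Continuous (f n) := fun n => (hf n).continuous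
  refine ⟨spd.conjugacy G f, spd.centralCorrection G f, spd.continuous_conjugacy hfc hδ,
    spd.continuous_centralCorrection hfc, spd.P3_centralCorrection,
    spd.conjugacy_apply_add_one hG hδ, fun m x => ?_, fun m x => ?_, spd.P3_conjugacy_sub hδ⟩
  · exact (spd.norm_conjugacy_sub_le hδ m x).trans_eq (by field_simp)
  · calc ‖spd.centralCorrection G f m x‖ ≤ spd.D * (spd.greenBound⁻¹ * ε) :=
          spd.norm_centralCorrection_le hδ m x
      _ ≤ spd.greenBound * (spd.greenBound⁻¹ * ε) := by gcongr; exact spd.D_le_greenBound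
      _ = ε := by field_simp
end
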